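/- arXiv:2604.18317 — 7 statements merged into one kernel-verified Lean document; each statement's English description precedes it below -/
import Mathlib

section
/- Let P₊, P₋ be complex d_A×d_A orthogonal projection matrices with P₊P₋ = 0, let Q₊, Q₋ be complex d_B×d_B orthogonal projection matrices with Q₊Q₋ = 0, and let ψ ∈ ℂ^{d_A·d_B} be a unit vector with (P₊⊗Q₊ + P₋⊗Q₋)ψ = ψ. Then there exist a finite index set L, positive reals (α_l)_{l∈L} with Σ_l α_l² = 1, orthonormal vectors (u_l)_{l∈L} in ℂ^{d_A}, orthonormal vectors (v_l)_{l∈L} in ℂ^{d_B}, and signs (Δ_l)_{l∈L} ∈ {+,−}^L, such that ψ = Σ_{l∈L} α_l (u_l ⊗ v_l) and for every l ∈ L one has P_{Δ_l} u_l = u_l and Q_{Δ_l} v_l = v_l. -/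
/-!
Put `ψ₊ = (P₊ ⊗ Q₊) ψ` and `ψ₋ = (P₋ ⊗ Q₋) ψ`. Then `ψ = ψ₊ + ψ₋`, and `ψ_±` is fixed by the
projection `P_± ⊗ Q_±`. Take an ordinary Schmidt decomposition of each `ψ_±`, built from an
eigenbasis of `M Mᴴ` for the coefficient matrix `M`. Each of its modes is `α_l⁻¹ M v̄_l` (or the
analogue on Bob's side), so it lies in the range of `M`. That range is fixed by `P_±` (resp.
`Q_±`), so the modes are `+1`-eigenvectors. Since `P₊ P₋ = 0` with `P₊` Hermitian, modes from
different sectors are orthogonal. So the two decompositions concatenate to a Schmidt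
decomposition of `ψ`, and `‖ψ‖ = 1` gives `∑ α_l² = 1`.
-/

open Matrix Kronecker
open scoped ComplexOrder

section SchmidtDecomposition

variable {ι κ m n : Type*} [DecidableEq ι] [DecidableEq κ] [Fintype m] [Fintype n]

def DotProductOrthonormal (u : ι → m → ℂ) : Prop :=
  ∀ l l', star (u l) ⬝ᵥ u l' = if l = l' then 1 else 0

theorem DotProductOrthonormal.comp {u : ι → m → ℂ} (hu : DotProductOrthonormal u) {f : κ → ι}
    (hf : f.Injective) : DotProductOrthonormal (u ∘ f) := fun l l' => by
  simp only [Function.comp_apply, hu (f l) (f l'), hf.eq_iff]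

theorem DotProductOrthonormal.sumElim {u : ι → m → ℂ} {u' : κ → m → ℂ}
    (hu : DotProductOrthonormal u) (hu' : DotProductOrthonormal u')
    (h : ∀ i j, star (u i) ⬝ᵥ u' j = 0) : DotProductOrthonormal (Sum.elim u u')
  | .inl i, .inl j => by simpa using hu i j
  | .inl i, .inr j => by simpa using h i j
  | .inr i, .inl j => by simpa [star_dotProduct (u' i)] using h j i
  | .inr i, .inr j => by simpa using hu' i j

theorem star_prod_dotProduct_prod (u u' : m → ℂ) (v v' : n → ℂ) :
    star (fun p : m × n => u p.1 * v p.2) ⬝ᵥ (fun p : m × n => u' p.1 * v' p.2) =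
      (star u ⬝ᵥ u') * (star v ⬝ᵥ v') := by
  simp only [dotProduct, Pi.star_apply, star_mul', Fintype.sum_prod_type, Finset.sum_mul_sum]
  exact Finset.sum_congr rfl fun a _ => Finset.sum_congr rfl fun b _ => by ring

theorem mulVec_star_eq_smul_of_eq_sum {p : Type*} [Fintype ι] {M : Matrix p m ℂ} {c : ι → ℂ}
    {x : ι → p → ℂ} {y : ι → m → ℂ} (hy : DotProductOrthonormal y)
    (hM : M = ∑ l, c l • vecMulVec (x l) (y l)) (k : ι) :
    M *ᵥ star (y k) = c k • x k := by
  simp only [hM, sum_mulVec, smul_mulVec, vecMulVec_mulVec,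
    dotProduct_comm (y _), hy k, op_smul_eq_smul, ite_smul, one_smul, zero_smul, smul_ite,
    smul_zero, Finset.sum_ite_eq, Finset.mem_univ, if_true]

theorem mulVec_eq_self_of_mul_eq {P : Matrix m m ℂ} {M : Matrix m n ℂ} (hPM : P * M = M)
    {x : n → ℂ} {y : m → ℂ} {c : ℂ} (hc : c ≠ 0) (hM : M *ᵥ x = c • y) : P *ᵥ y = y := by
  apply smul_right_injective _ hc
  simp only [← mulVec_smul, ← hM, mulVec_mulVec, hPM]

theorem star_dotProduct_eq_zero_of_mul_eq_zero {P P' : Matrix m m ℂ} (hP : P.IsHermitian)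
    (hPP' : P * P' = 0) {u u' : m → ℂ} (hu : P *ᵥ u = u) (hu' : P' *ᵥ u' = u') :
    star u ⬝ᵥ u' = 0 := by
  rw [← hu, ← hu', star_mulVec, hP.eq, dotProduct_mulVec, vecMul_vecMul,
    hPP', vecMul_zero, zero_dotProduct]

theorem kronecker_mulVec_mulVec_self {P : Matrix m m ℂ} {Q : Matrix n n ℂ}
    (hP : IsIdempotentElem P) (hQ : IsIdempotentElem Q) (ψ : m × n → ℂ) :
    (P ⊗ₖ Q) *ᵥ ((P ⊗ₖ Q) *ᵥ ψ) = (P ⊗ₖ Q) *ᵥ ψ := by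
  rw [mulVec_mulVec, ← mul_kronecker_mul, hP.eq, hQ.eq]

structure IsSchmidtDecomposition [Fintype ι] (ψ : m × n → ℂ) (α : ι → ℝ) (u : ι → m → ℂ)
    (v : ι → n → ℂ) : Prop where
  pos : ∀ l, 0 < α l
  orthonormal_left : DotProductOrthonormal u
  orthonormal_right : DotProductOrthonormal v
  eq_sum : ψ = ∑ l, (α l : ℂ) • fun p : m × n => u l p.1 * v l p.2

namespace IsSchmidtDecomposition

variable [Fintype ι] {ψ : m × n → ℂ} {α : ι → ℝ} {u : ι → m → ℂ} {v : ι → n → ℂ}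

theorem comp_equiv [Fintype κ] (h : IsSchmidtDecomposition ψ α u v) (e : κ ≃ ι) :
    IsSchmidtDecomposition ψ (α ∘ e) (u ∘ e) (v ∘ e) where
  pos l := h.pos (e l)
  orthonormal_left := h.orthonormal_left.comp e.injective
  orthonormal_right := h.orthonormal_right.comp e.injective
  eq_sum := h.eq_sum.trans (e.sum_comp _).symm

theorem sumElim [Fintype κ] {ψ' : m × n → ℂ} {α' : κ → ℝ} {u' : κ → m → ℂ} {v' : κ → n → ℂ}
    (h : IsSchmidtDecomposition ψ α u v) (h' : IsSchmidtDecomposition ψ' α' u' v')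
    (hu : ∀ i j, star (u i) ⬝ᵥ u' j = 0) (hv : ∀ i j, star (v i) ⬝ᵥ v' j = 0) :
    IsSchmidtDecomposition (ψ + ψ') (Sum.elim α α') (Sum.elim u u') (Sum.elim v v') where
  pos := Sum.rec h.pos h'.pos
  orthonormal_left := h.orthonormal_left.sumElim h'.orthonormal_left hu
  orthonormal_right := h.orthonormal_right.sumElim h'.orthonormal_right hv
  eq_sum := by rw [Fintype.sum_sum_type, h.eq_sum, h'.eq_sum]; rfl

theorem star_dotProduct_self (h : IsSchmidtDecomposition ψ α u v) :
    star ψ ⬝ᵥ ψ = ((∑ l, α l ^ 2 : ℝ) : ℂ) := by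
  rw [h.eq_sum]
  simp only [star_sum, sum_dotProduct, dotProduct_sum, star_smul, smul_dotProduct,
    dotProduct_smul, star_prod_dotProduct_prod, h.orthonormal_left _ _,
    h.orthonormal_right _ _]
  simp [sq]

theorem mulVec_eq_self {P : Matrix m m ℂ} {Q : Matrix n n ℂ}
    (h : IsSchmidtDecomposition ψ α u v) (hP : IsIdempotentElem P) (hQ : IsIdempotentElem Q)
    (hψ : (P ⊗ₖ Q) *ᵥ ψ = ψ) (l : ι) : P *ᵥ u l = u l ∧ Q *ᵥ v l = v l := by
  -- `ψ = vec X` in Mathlib's column-stacking convention, whence the transposes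
  set X : Matrix n m ℂ := Matrix.of fun b a => ψ (a, b)
  have hX : Q * X * Pᵀ = X :=
    vec_inj.mp ((kronecker_mulVec_vec Q X P).symm.trans hψ)
  have hQX : Q * X = X := by
    rw [← hX, ← Matrix.mul_assoc, ← Matrix.mul_assoc, hQ.eq]
  have hPX : P * Xᵀ = Xᵀ := by
    rw [← transpose_transpose P, ← transpose_mul, ← hX, Matrix.mul_assoc,
      ← transpose_mul, hP.eq]
  have hX_sum : X = ∑ l, (α l : ℂ) • vecMulVec (v l) (u l) := by
    ext b a
    simp only [X, of_apply, h.eq_sum, Finset.sum_apply, Matrix.sum_apply,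
      Matrix.smul_apply, Pi.smul_apply, vecMulVec_apply, smul_eq_mul, mul_comm (v _ b)]
  have hXt_sum : Xᵀ = ∑ l, (α l : ℂ) • vecMulVec (u l) (v l) := by
    simp only [hX_sum, transpose_sum, transpose_smul, transpose_vecMulVec]
  have hα : (α l : ℂ) ≠ 0 := Complex.ofReal_ne_zero.mpr (h.pos l).ne'
  exact ⟨mulVec_eq_self_of_mul_eq hPX hα
      (mulVec_star_eq_smul_of_eq_sum h.orthonormal_right hXt_sum l),
    mulVec_eq_self_of_mul_eq hQX hα (mulVec_star_eq_smul_of_eq_sum h.orthonormal_left hX_sum l)⟩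

end IsSchmidtDecomposition

theorem isSchmidtDecomposition_of_orthogonal [Fintype ι] {ψ : m × n → ℂ} {e : ι → m → ℂ}
    {w : ι → n → ℂ} {c : ι → ℝ} (he : DotProductOrthonormal e)
    (hw : ∀ i j, star (w i) ⬝ᵥ w j = if i = j then (c i : ℂ) else 0)
    (hψ : ψ = ∑ i, fun p : m × n => e i p.1 * w i p.2) :
    IsSchmidtDecomposition ψ (fun i : {i // 0 < c i} => √(c i)) (fun i => e i)
      (fun i => ((√(c i) : ℝ) : ℂ)⁻¹ • w i) where
  pos i := Real.sqrt_pos.mpr i.2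
  orthonormal_left := he.comp Subtype.val_injective
  orthonormal_right i j := by
    have hsq : ((√(c i) : ℝ) : ℂ) * √(c i) = c i := by
      exact_mod_cast Real.mul_self_sqrt i.2.le
    have hne : ((√(c i) : ℝ) : ℂ) ≠ 0 := by exact_mod_cast (Real.sqrt_pos.mpr i.2).ne'
    rw [star_smul, smul_dotProduct, dotProduct_smul, hw, star_inv₀, Complex.star_def,
      Complex.conj_ofReal]
    by_cases hij : i = j
    · subst hij
      simp only [if_true, smul_eq_mul, ← hsq]
      field_simp
    · simp [hij, Subtype.val_inj]
  eq_sum := by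
    have hw0 : ∀ i, ¬ 0 < c i → w i = 0 := fun i hi => by
      have hc : (0 : ℂ) ≤ c i := by simpa [hw] using dotProduct_star_self_nonneg (w i)
      have hci : c i = 0 := le_antisymm (not_lt.mp hi) (Complex.zero_le_real.mp hc)
      exact dotProduct_star_self_eq_zero.mp (by simpa [hci] using hw i i)
    have hterm : ∀ i : {i // 0 < c i}, (((√(c i) : ℝ) : ℂ) • fun p : m × n =>
        e i p.1 * (((√(c i) : ℝ) : ℂ)⁻¹ • w i) p.2) = fun p => e i p.1 * w i p.2 := by
      intro i
      have hne : ((√(c i) : ℝ) : ℂ) ≠ 0 := by exact_mod_cast (Real.sqrt_pos.mpr i.2).ne'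
      ext p
      simp only [Pi.smul_apply, smul_eq_mul]
      field_simp
    rw [Finset.sum_congr rfl fun i _ => hterm i, hψ,
      ← Fintype.sum_subtype_add_sum_subtype (fun i => 0 < c i), add_eq_left]
    exact Finset.sum_eq_zero fun i _ => funext fun p => by simp [hw0 i i.2]

theorem exists_orthogonal_decomposition [DecidableEq m] (ψ : m × n → ℂ) :
    ∃ (e : m → m → ℂ) (w : m → n → ℂ) (c : m → ℝ), DotProductOrthonormal e ∧
      (∀ i j, star (w i) ⬝ᵥ w j = if i = j then (c i : ℂ) else 0) ∧
      ψ = ∑ i, fun p : m × n => e i p.1 * w i p.2 := by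
  set M : Matrix m n ℂ := Matrix.of fun a b => ψ (a, b)
  have hA : (M * Mᴴ).IsHermitian := isHermitian_mul_conjTranspose_self M
  set U : Matrix m m ℂ := (hA.eigenvectorUnitary : Matrix m m ℂ)
  have hUU : star U * U = 1 := Unitary.coe_star_mul_self _
  have hUU' : U * star U = 1 := Unitary.coe_mul_star_self _
  set W : Matrix m n ℂ := star U * M
  have hW : W * Wᴴ = diagonal (RCLike.ofReal ∘ hA.eigenvalues) := by
    rw [← hA.conjStarAlgAut_star_eigenvectorUnitary, Unitary.conjStarAlgAut_star_apply,
      conjTranspose_mul, ← star_eq_conjTranspose, star_star]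
    simp only [W, U, Matrix.mul_assoc]
  have hM : M = U * W := by rw [← Matrix.mul_assoc, hUU', Matrix.one_mul]
  refine ⟨fun i a => U a i, fun i b => W i b, hA.eigenvalues, fun i j => ?_, fun i j => ?_, ?_⟩
  · simpa [mul_apply, one_apply, dotProduct] using congrFun₂ hUU i j
  · rw [dotProduct_comm,
      show (fun b => W j b) ⬝ᵥ star (fun b => W i b) = (W * Wᴴ)ᵀ i j from rfl, hW,
      diagonal_transpose, diagonal_apply]
    rfl
  · funext ⟨a, b⟩
    rw [Finset.sum_apply]
    exact (congrFun₂ hM a b).trans (mul_apply ..)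

theorem exists_isSchmidtDecomposition (ψ : m × n → ℂ) :
    ∃ (r : ℕ) (α : Fin r → ℝ) (u : Fin r → m → ℂ) (v : Fin r → n → ℂ),
      IsSchmidtDecomposition ψ α u v := by
  classical
  obtain ⟨e, w, c, he, hw, hψ⟩ := exists_orthogonal_decomposition ψ
  exact ⟨_, _, _, _,
    (isSchmidtDecomposition_of_orthogonal he hw hψ).comp_equiv (Fintype.equivFin _).symm⟩

end SchmidtDecomposition

theorem pqss_schmidt_decomposition_general
    {dA dB : ℕ}
    (Pp Pm : Matrix (Fin dA) (Fin dA) ℂ)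
    (hPp : Pp.IsHermitian) (hPp2 : Pp * Pp = Pp)
    (hPm2 : Pm * Pm = Pm)
    (hPpm : Pp * Pm = 0)
    (Qp Qm : Matrix (Fin dB) (Fin dB) ℂ)
    (hQp : Qp.IsHermitian) (hQp2 : Qp * Qp = Qp)
    (hQm2 : Qm * Qm = Qm)
    (hQpm : Qp * Qm = 0)
    (ψ : Fin dA × Fin dB → ℂ) (hψ : star ψ ⬝ᵥ ψ = 1)
    (h : (Pp ⊗ₖ Qp + Pm ⊗ₖ Qm) *ᵥ ψ = ψ) :
    ∃ (L : ℕ) (α : Fin L → ℝ) (u : Fin L → Fin dA → ℂ) (v : Fin L → Fin dB → ℂ)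
      (Δ : Fin L → Bool),
      (∀ l, 0 < α l) ∧
      (∑ l, (α l) ^ 2 = 1) ∧
      (∀ l l', star (u l) ⬝ᵥ u l' = if l = l' then 1 else 0) ∧
      (∀ l l', star (v l) ⬝ᵥ v l' = if l = l' then 1 else 0) ∧
      (ψ = ∑ l, (α l : ℂ) • fun p : Fin dA × Fin dB => u l p.1 * v l p.2) ∧
      (∀ l, (if Δ l then Pp else Pm) *ᵥ u l = u l) ∧
      (∀ l, (if Δ l then Qp else Qm) *ᵥ v l = v l) := by
  obtain ⟨r, αp, up, vp, hp⟩ := exists_isSchmidtDecomposition ((Pp ⊗ₖ Qp) *ᵥ ψ)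
  obtain ⟨s, αm, um, vm, hm⟩ := exists_isSchmidtDecomposition ((Pm ⊗ₖ Qm) *ᵥ ψ)
  have hp_fix := hp.mulVec_eq_self hPp2 hQp2 (kronecker_mulVec_mulVec_self hPp2 hQp2 ψ)
  have hm_fix := hm.mulVec_eq_self hPm2 hQm2 (kronecker_mulVec_mulVec_self hPm2 hQm2 ψ)
  have hd := (hp.sumElim hm
    (fun i j => star_dotProduct_eq_zero_of_mul_eq_zero hPp hPpm (hp_fix i).1 (hm_fix j).1)
    (fun i j => star_dotProduct_eq_zero_of_mul_eq_zero hQp hQpm (hp_fix i).2 (hm_fix j).2)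
    ).comp_equiv finSumFinEquiv.symm
  rw [← add_mulVec, h] at hd
  refine ⟨r + s, _, _, _, fun l => (finSumFinEquiv.symm l).isLeft, hd.pos, ?_,
    hd.orthonormal_left, hd.orthonormal_right, hd.eq_sum, fun l => ?_, fun l => ?_⟩
  · exact_mod_cast hd.star_dotProduct_self.symm.trans hψ
  all_goals
    obtain ⟨i | i, rfl⟩ := finSumFinEquiv.surjective l <;> simp [hp_fix, hm_fix]

/-- Schmidt-type decomposition of a PQSS: if a unit vector `ψ` satisfies
`(P₊⊗Q₊ + P₋⊗Q₋)ψ = ψ` for mutually orthogonal projection pairs `P₊,P₋` and `Q₊,Q₋`,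
then `ψ = Σ_l α_l (u_l ⊗ v_l)` with `α_l > 0`, `Σ α_l² = 1`, `(u_l)` orthonormal,
`(v_l)` orthonormal, and signs `Δ_l` such that `P_{Δ_l} u_l = u_l`, `Q_{Δ_l} v_l = v_l`. -/
theorem pqss_schmidt_decomposition
    {dA dB : ℕ}
    (Pp Pm : Matrix (Fin dA) (Fin dA) ℂ)
    (hPp : Pp.IsHermitian) (hPp2 : Pp * Pp = Pp)
    (hPm : Pm.IsHermitian) (hPm2 : Pm * Pm = Pm)
    (hPpm : Pp * Pm = 0)
    (Qp Qm : Matrix (Fin dB) (Fin dB) ℂ)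
    (hQp : Qp.IsHermitian) (hQp2 : Qp * Qp = Qp)
    (hQm : Qm.IsHermitian) (hQm2 : Qm * Qm = Qm)
    (hQpm : Qp * Qm = 0)
    (ψ : Fin dA × Fin dB → ℂ) (hψ : star ψ ⬝ᵥ ψ = 1)
    (h : (Pp ⊗ₖ Qp + Pm ⊗ₖ Qm) *ᵥ ψ = ψ) :
    ∃ (L : ℕ) (α : Fin L → ℝ) (u : Fin L → Fin dA → ℂ) (v : Fin L → Fin dB → ℂ)
      (Δ : Fin L → Bool),
      (∀ l, 0 < α l) ∧
      (∑ l, (α l) ^ 2 = 1) ∧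
      (∀ l l', star (u l) ⬝ᵥ u l' = if l = l' then 1 else 0) ∧
      (∀ l l', star (v l) ⬝ᵥ v l' = if l = l' then 1 else 0) ∧
      (ψ = ∑ l, (α l : ℂ) • fun p : Fin dA × Fin dB => u l p.1 * v l p.2) ∧
      (∀ l, (if Δ l then Pp else Pm) *ᵥ u l = u l) ∧
      (∀ l, (if Δ l then Qp else Qm) *ᵥ v l = v l) :=
  pqss_schmidt_decomposition_general Pp Pm hPp hPp2 hPm2 hPpm Qp Qm hQp hQp2 hQm2 hQpm ψ hψ h
end

section
/- Let (A_{ij}), (B_{ij}), ψ be a perfect strategy for the m×n quantum magic rectangle game of local dimensions (d_A,d_B). Then there exist an integer K ≥ 1, reals β_1,…,β_K > 0 with Σ_k β_k² = 1, and pairwise orthogonal unit vectors ψ_1,…,ψ_K ∈ ℂ^{d_A·d_B} such that: (i) ψ = Σ_{k=1}^K β_k ψ_k; (ii) each ψ_k is maximally entangled, i.e. ψ_k = (1/√{r_k}) Σ_{l∈L_k} u_l ⊗ v_l where the L_k are disjoint finite index sets of sizes r_k, (u_l) is an orthonormal family in ℂ^{d_A} and (v_l) is an orthonormal family in ℂ^{d_B}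 (over the union of all L_k); (iii) the values β_k/√{r_k} are pairwise distinct; and (iv) each ψ_k is itself a perfect quantum solution state for the same observables, i.e. ⟨ψ_k, (A_{ij} ⊗ B_{ij}) ψ_k⟩ = 1 for all i,j. -/
open Matrix Kronecker

/-- An `m × n` quantum magic rectangle strategy: Alice's observables `A i j` are Hermitian
unitaries commuting within each row with each row product `I`; Bob's observables `B i j` are
Hermitian unitaries commuting within each column with each column product `-I`; `ψ` is a unit
vector in the (Kronecker) tensor product; and the strategy is perfect:
`⟨ψ, (A i j ⊗ B i j) ψ⟩ = 1` for all cells `(i, j)`. -/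
def IsPerfectStrategy {m n : ℕ} {ιA ιB : Type*}
    [Fintype ιA] [DecidableEq ιA] [Fintype ιB] [DecidableEq ιB]
    (A : Fin m → Fin n → Matrix ιA ιA ℂ)
    (B : Fin m → Fin n → Matrix ιB ιB ℂ)
    (ψ : ιA × ιB → ℂ) : Prop :=
  (∀ i j, (A i j).IsHermitian) ∧
  (∀ i j, A i j * A i j = 1) ∧
  (∀ i j j', A i j * A i j' = A i j' * A i j) ∧
  (∀ i, (List.ofFn fun j => A i j).prod = 1) ∧
  (∀ i j, (B i j).IsHermitian) ∧
  (∀ i j, B i j * B i j = 1) ∧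
  (∀ i i' j, B i j * B i' j = B i' j * B i j) ∧
  (∀ j, (List.ofFn fun i => B i j).prod = -1) ∧
  star ψ ⬝ᵥ ψ = 1 ∧
  (∀ i j, star ψ ⬝ᵥ ((A i j ⊗ₖ B i j) *ᵥ ψ) = 1)

/-!
Write `ψ = vec X`, where `X` is the `dB × dA` coefficient matrix. The observable `A ⊗ B` of a cell
is unitary, so `⟨ψ, (A ⊗ B) ψ⟩ = 1 = ‖ψ‖²` forces `(A ⊗ B) ψ = ψ`, i.e. `B X Aᵀ = X`; hence `B`
commutes with Bob's reduced density matrix `X Xᴴ`, and therefore with each of its spectral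
projections `P_λ`. Diagonalising `X Xᴴ` gives the Schmidt decomposition of `ψ`, with Schmidt
coefficients `√λ`; grouping the Schmidt terms by the distinct positive eigenvalues `λ` gives
`ψ = ∑_λ P_λ ψ`, where each normalised `P_λ ψ` is maximally entangled and is still fixed by every
`A ⊗ B`, because `P_λ` commutes with `B`.
-/

section TensorVectors

variable {m n : Type*} [Fintype m] [Fintype n]

lemma star_dotProduct_prod {R : Type*} [CommSemiring R] [StarRing R] (x x' : m → R)
    (y y' : n → R) :
    star (fun p : m × n => x p.1 * y p.2) ⬝ᵥ (fun p => x' p.1 * y' p.2) =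
      (star x ⬝ᵥ x') * (star y ⬝ᵥ y') := by
  simp only [dotProduct, Fintype.sum_prod_type, Finset.sum_mul_sum, Pi.star_apply, star_mul']
  exact Finset.sum_congr rfl fun a _ => Finset.sum_congr rfl fun b _ => by ring

noncomputable def maximallyEntangledState {K : ℕ} {r : Fin K → ℕ}
    (u : (Σ k, Fin (r k)) → m → ℂ) (v : (Σ k, Fin (r k)) → n → ℂ) (k : Fin K) : m × n → ℂ :=
  ((Real.sqrt (r k) : ℂ))⁻¹ • ∑ l : Fin (r k), fun p : m × n => u ⟨k, l⟩ p.1 * v ⟨k, l⟩ p.2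

lemma star_maximallyEntangledState_dotProduct {K : ℕ} {r : Fin K → ℕ} (hr : ∀ k, 0 < r k)
    {u : (Σ k, Fin (r k)) → m → ℂ} {v : (Σ k, Fin (r k)) → n → ℂ}
    (hu : ∀ l l', star (u l) ⬝ᵥ u l' = if l = l' then 1 else 0)
    (hv : ∀ l l', star (v l) ⬝ᵥ v l' = if l = l' then 1 else 0) (k k' : Fin K) :
    star (maximallyEntangledState u v k) ⬝ᵥ maximallyEntangledState u v k' =
      if k = k' then 1 else 0 := by
  simp only [maximallyEntangledState, star_smul, star_sum, smul_dotProduct, dotProduct_smul,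
    sum_dotProduct, dotProduct_sum, star_dotProduct_prod, hu, hv]
  split_ifs with hk
  · subst hk
    have hr' : (Real.sqrt (r k) : ℂ) ≠ 0 := by
      exact_mod_cast (Real.sqrt_pos.mpr (Nat.cast_pos.mpr (hr k))).ne'
    simp only [star_inv₀, RCLike.star_def, Complex.conj_ofReal, Sigma.mk.injEq, heq_eq_eq,
      true_and, mul_ite, mul_one, mul_zero, Finset.sum_ite_eq', Finset.mem_univ, ↓reduceIte,
      smul_eq_mul, Finset.sum_const, Finset.card_univ, Fintype.card_fin, nsmul_eq_mul]
    field_simp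
    exact_mod_cast (Real.sq_sqrt (Nat.cast_nonneg (r k))).symm
  · simp [hk]

end TensorVectors

section LevelSets

variable {P β : Type*} [Fintype P] [DecidableEq β]

lemma exists_sigma_equiv_levelSets (e : P → β) :
    ∃ (K : ℕ) (μ : Fin K → β) (r : Fin K → ℕ) (σ : (Σ k, Fin (r k)) ≃ P),
      Function.Injective μ ∧ (∀ k, 0 < r k) ∧ ∀ l, e (σ l) = μ l.1 := by
  classical
  set S := Finset.univ.image e
  let μ : Fin S.card → β := fun k => S.equivFin.symm k
  let κ : P → Fin S.card := fun c => S.equivFin ⟨e c, Finset.mem_image_of_mem e (Finset.mem_univ c)⟩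
  have hμκ : ∀ c, μ (κ c) = e c := by simp [μ, κ]
  refine ⟨S.card, μ, fun k => Fintype.card {c // κ c = k},
    (Equiv.sigmaCongrRight fun k => (Fintype.equivFin _).symm).trans (Equiv.sigmaFiberEquiv κ),
    fun k k' h => S.equivFin.symm.injective (Subtype.ext h), fun k => ?_, fun l => ?_⟩
  · obtain ⟨c, -, hc⟩ := Finset.mem_image.mp (S.equivFin.symm k).2
    refine Fintype.card_pos_iff.mpr ⟨⟨c, ?_⟩⟩
    simp [κ, hc]
  · rw [← hμκ]
    exact congrArg μ ((Fintype.equivFin _).symm l.2).2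

lemma sum_sigma_equiv_levelSet {M : Type*} [AddCommMonoid M] {e : P → β} {K : ℕ}
    {μ : Fin K → β} {r : Fin K → ℕ} {σ : (Σ k, Fin (r k)) ≃ P} (hμ : Function.Injective μ)
    (he : ∀ l, e (σ l) = μ l.1) (h : P → M) (k : Fin K) :
    ∑ i, h (σ ⟨k, i⟩) = ∑ c, if e c = μ k then h c else 0 := by
  rw [← σ.sum_comp, Fintype.sum_sigma]
  simp [he, hμ.eq_iff]

end LevelSets

lemma Fintype.sum_subtype_of_eq_zero {ι M : Type*} [Fintype ι] [AddCommMonoid M] {p : ι → Prop}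
    [DecidablePred p] {f : ι → M} (hf : ∀ c, ¬ p c → f c = 0) :
    ∑ c : {c // p c}, f c = ∑ c, f c := by
  rw [← Fintype.sum_subtype_add_sum_subtype p f,
    Fintype.sum_eq_zero (fun c : {c // ¬ p c} => f c) fun c => hf c c.2, add_zero]

section Gram

variable {m n : Type*} [Fintype m] [Fintype n] [DecidableEq n] (X : Matrix n m ℂ)

noncomputable def gramUnitary : Matrix n n ℂ :=
  (isHermitian_mul_conjTranspose_self X).eigenvectorUnitary

noncomputable def gramEigenvalues : n → ℝ :=
  (isHermitian_mul_conjTranspose_self X).eigenvalues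

noncomputable def gramCoeffs : Matrix n m ℂ :=
  star (gramUnitary X) * X

/-- The `c`-th Schmidt term of `vec X`: eigenvector `c` of `X Xᴴ` (Bob's side) tensored with
the `c`-th row of `gramCoeffs X` (Alice's side). -/
noncomputable def gramComponent (c : n) : m × n → ℂ :=
  fun p => gramUnitary X p.2 c * gramCoeffs X c p.1

open scoped ComplexOrder in
lemma gramEigenvalues_nonneg (c : n) : 0 ≤ gramEigenvalues X c :=
  (posSemidef_self_mul_conjTranspose X).eigenvalues_nonneg c

lemma cfc_gram_mul (g : ℝ → ℝ) :
    cfc g (X * Xᴴ) * X =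
      gramUnitary X * diagonal (fun c => (g (gramEigenvalues X c) : ℂ)) * gramCoeffs X := by
  rw [(isHermitian_mul_conjTranspose_self X).cfc_eq, IsHermitian.cfc,
    Unitary.conjStarAlgAut_apply, Matrix.mul_assoc _ (star _)]
  rfl

lemma star_gramCoeffs_dotProduct (c c' : n) :
    star (gramCoeffs X c) ⬝ᵥ gramCoeffs X c' =
      if c = c' then (gramEigenvalues X c : ℂ) else 0 := by
  have hdiag : gramCoeffs X * (gramCoeffs X)ᴴ = diagonal fun c => (gramEigenvalues X c : ℂ) := by
    have := (isHermitian_mul_conjTranspose_self X).conjStarAlgAut_star_eigenvectorUnitary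
    rw [Unitary.conjStarAlgAut_star_apply] at this
    rw [gramCoeffs, conjTranspose_mul, ← star_eq_conjTranspose, star_star]
    simp only [Matrix.mul_assoc] at this ⊢
    exact this
  rw [dotProduct_comm]
  change (gramCoeffs X * (gramCoeffs X)ᴴ) c' c = _
  rw [hdiag, diagonal_apply]
  obtain rfl | h := eq_or_ne c c' <;> simp [*, Ne.symm]

lemma star_col_dotProduct_col_gramUnitary (c c' : n) :
    star (fun b => gramUnitary X b c) ⬝ᵥ (fun b => gramUnitary X b c') =
      if c = c' then 1 else 0 := by
  rw [← one_apply, ← Unitary.coe_star_mul_self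
    (isHermitian_mul_conjTranspose_self X).eigenvectorUnitary, mul_apply]
  rfl

open scoped ComplexOrder in
lemma gramComponent_eq_zero {c : n} (hc : ¬ 0 < gramEigenvalues X c) :
    gramComponent X c = 0 := by
  have hrow : gramCoeffs X c = 0 := by
    apply dotProduct_star_self_eq_zero.mp
    rw [star_gramCoeffs_dotProduct, if_pos rfl,
      le_antisymm (not_lt.mp hc) (gramEigenvalues_nonneg X c), Complex.ofReal_zero]
  ext p
  simp [gramComponent, hrow]

lemma vec_cfc_mul (g : ℝ → ℝ) :
    vec (cfc g (X * Xᴴ) * X) =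
      ∑ c : {c // 0 < gramEigenvalues X c}, (g (gramEigenvalues X c) : ℂ) • gramComponent X c := by
  rw [Fintype.sum_subtype_of_eq_zero (f := fun c => (g (gramEigenvalues X c) : ℂ) •
    gramComponent X c) fun c hc => by rw [gramComponent_eq_zero X hc, smul_zero]]
  ext ⟨a, b⟩
  rw [cfc_gram_mul, vec, mul_apply, Finset.sum_apply]
  refine Finset.sum_congr rfl fun c _ => ?_
  simp only [mul_diagonal, gramComponent, Pi.smul_apply, smul_eq_mul]
  ring

lemma vec_eq_sum_gramComponent :
    vec X = ∑ c : {c // 0 < gramEigenvalues X c}, gramComponent X c := by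
  have hone : cfc (fun _ : ℝ => (1 : ℝ)) (X * Xᴴ) = 1 :=
    cfc_const_one ℝ _ (isHermitian_mul_conjTranspose_self X).isSelfAdjoint
  simpa [hone] using vec_cfc_mul X fun _ => 1

lemma sum_gramEigenvalues (hX : star (vec X) ⬝ᵥ vec X = 1) :
    ∑ c : {c // 0 < gramEigenvalues X c}, gramEigenvalues X c = 1 := by
  rw [Fintype.sum_subtype_of_eq_zero fun c hc =>
    le_antisymm (not_lt.mp hc) (gramEigenvalues_nonneg X c)]
  have htrace := (isHermitian_mul_conjTranspose_self X).trace_eq_sum_eigenvalues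
  rw [trace_mul_comm, ← star_vec_dotProduct_vec, hX] at htrace
  apply Complex.ofReal_injective
  push_cast
  exact htrace.symm

variable {ι : Type*} (σ : ι → {c // 0 < gramEigenvalues X c})

noncomputable def schmidtLeft (l : ι) : m → ℂ :=
  (Real.sqrt (gramEigenvalues X (σ l)) : ℂ)⁻¹ • gramCoeffs X (σ l)

noncomputable def schmidtRight (l : ι) : n → ℂ :=
  fun b => gramUnitary X b (σ l)

lemma star_schmidtLeft_dotProduct [DecidableEq ι] {σ} (hσ : Function.Injective σ) (l l' : ι) :
    star (schmidtLeft X σ l) ⬝ᵥ schmidtLeft X σ l' = if l = l' then 1 else 0 := by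
  rw [schmidtLeft, schmidtLeft, star_smul, smul_dotProduct, dotProduct_smul,
    star_gramCoeffs_dotProduct]
  simp only [Subtype.val_inj, hσ.eq_iff]
  split_ifs with hl
  · subst hl
    have hpos := (σ l).2
    have hne : (Real.sqrt (gramEigenvalues X (σ l)) : ℂ) ≠ 0 := by
      exact_mod_cast (Real.sqrt_pos.mpr hpos).ne'
    rw [star_inv₀, Complex.star_def, Complex.conj_ofReal, smul_eq_mul, smul_eq_mul]
    field_simp
    exact_mod_cast (Real.sq_sqrt hpos.le).symm
  · simp

lemma star_schmidtRight_dotProduct [DecidableEq ι] {σ} (hσ : Function.Injective σ) (l l' : ι) :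
    star (schmidtRight X σ l) ⬝ᵥ schmidtRight X σ l' = if l = l' then 1 else 0 := by
  unfold schmidtRight
  simpa only [Subtype.val_inj, hσ.eq_iff] using
    star_col_dotProduct_col_gramUnitary X (σ l) (σ l')

lemma smul_maximallyEntangledState_schmidt {K : ℕ} {μ : Fin K → ℝ} {r : Fin K → ℕ}
    (hr : ∀ k, 0 < r k) {σ : (Σ k, Fin (r k)) → {c // 0 < gramEigenvalues X c}}
    (hσ : ∀ l, gramEigenvalues X (σ l) = μ l.1) (k : Fin K) :
    ((Real.sqrt (r k) * Real.sqrt (μ k) : ℝ) : ℂ) •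
        maximallyEntangledState (schmidtLeft X σ) (schmidtRight X σ) k =
      ∑ i, gramComponent X (σ ⟨k, i⟩) := by
  have hrk : (Real.sqrt (r k) : ℂ) ≠ 0 := by
    exact_mod_cast (Real.sqrt_pos.mpr (Nat.cast_pos.mpr (hr k))).ne'
  rw [maximallyEntangledState, smul_smul, Complex.ofReal_mul, mul_comm, ← mul_assoc,
    inv_mul_cancel₀ hrk, one_mul, Finset.smul_sum]
  refine Finset.sum_congr rfl fun i _ => ?_
  have hne : (Real.sqrt (μ k) : ℂ) ≠ 0 := by
    exact_mod_cast (Real.sqrt_pos.mpr (hσ ⟨k, i⟩ ▸ (σ ⟨k, i⟩).2)).ne'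
  ext p
  simp only [schmidtLeft, schmidtRight, gramComponent, hσ, Pi.smul_apply, smul_eq_mul]
  field_simp

end Gram

theorem exists_maximallyEntangled_decomposition {m n : Type*} [Fintype m] [Fintype n]
    [DecidableEq n] (X : Matrix n m ℂ) (hX : star (vec X) ⬝ᵥ vec X = 1) :
    ∃ (K : ℕ) (_ : 1 ≤ K) (β : Fin K → ℝ) (r : Fin K → ℕ)
      (u : (Σ k : Fin K, Fin (r k)) → m → ℂ) (v : (Σ k : Fin K, Fin (r k)) → n → ℂ),
      (∀ k, 0 < β k) ∧ (∑ k, β k ^ 2 = 1) ∧ (∀ k, 0 < r k) ∧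
      (∀ l l', star (u l) ⬝ᵥ u l' = if l = l' then 1 else 0) ∧
      (∀ l l', star (v l) ⬝ᵥ v l' = if l = l' then 1 else 0) ∧
      vec X = ∑ k, (β k : ℂ) • maximallyEntangledState u v k ∧
      (∀ k k', β k / Real.sqrt (r k) = β k' / Real.sqrt (r k') → k = k') ∧
      ∀ k, ∃ g : ℝ → ℝ,
        maximallyEntangledState u v k = ((β k : ℂ))⁻¹ • vec (cfc g (X * Xᴴ) * X) := by
  classical
  obtain ⟨K, μ, r, σ, hμ, hr, hσ⟩ :=
    exists_sigma_equiv_levelSets fun c : {c // 0 < gramEigenvalues X c} => gramEigenvalues X c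
  have hμpos : ∀ k, 0 < μ k := fun k => hσ ⟨k, ⟨0, hr k⟩⟩ ▸ (σ _).2
  set β : Fin K → ℝ := fun k => Real.sqrt (r k) * Real.sqrt (μ k)
  have hβ : ∀ k, 0 < β k := fun k =>
    mul_pos (Real.sqrt_pos.mpr (Nat.cast_pos.mpr (hr k))) (Real.sqrt_pos.mpr (hμpos k))
  have hblock := smul_maximallyEntangledState_schmidt X hr hσ
  have hsq : ∑ k, β k ^ 2 = 1 := by
    calc ∑ k, β k ^ 2 = ∑ k, ∑ i : Fin (r k), gramEigenvalues X (σ ⟨k, i⟩) := by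
          refine Finset.sum_congr rfl fun k _ => ?_
          simp only [β, hσ, Finset.sum_const, Finset.card_univ, Fintype.card_fin, nsmul_eq_mul,
            mul_pow, Real.sq_sqrt (Nat.cast_nonneg _), Real.sq_sqrt (hμpos k).le]
      _ = 1 := by
          rw [← Fintype.sum_sigma (fun l => gramEigenvalues X (σ l)),
            σ.sum_comp (fun c => gramEigenvalues X c), sum_gramEigenvalues X hX]
  refine ⟨K, Nat.one_le_iff_ne_zero.mpr (by rintro rfl; simp at hsq), β, r, schmidtLeft X σ,
    schmidtRight X σ, hβ, hsq, hr, star_schmidtLeft_dotProduct X σ.injective,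
    star_schmidtRight_dotProduct X σ.injective, ?_, fun k k' hkk' => ?_,
    fun k => ⟨fun x => if x = μ k then 1 else 0, ?_⟩⟩
  · rw [vec_eq_sum_gramComponent, ← σ.sum_comp, Fintype.sum_sigma]
    exact Finset.sum_congr rfl fun k _ => (hblock k).symm
  · have hdiv : ∀ k, β k / Real.sqrt (r k) = Real.sqrt (μ k) := fun k =>
      mul_div_cancel_left₀ _ (Real.sqrt_pos.mpr (Nat.cast_pos.mpr (hr k))).ne'
    rw [hdiv, hdiv, Real.sqrt_inj (hμpos k).le (hμpos k').le] at hkk'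
    exact hμ hkk'
  · have hsum : ∑ c : {c // 0 < gramEigenvalues X c},
        ((if gramEigenvalues X c = μ k then 1 else 0 : ℝ) : ℂ) • gramComponent X c =
        ∑ i, gramComponent X (σ ⟨k, i⟩) := by
      rw [sum_sigma_equiv_levelSet (e := fun c : {c // 0 < gramEigenvalues X c} =>
        gramEigenvalues X c) hμ hσ fun c => gramComponent X c]
      simp [apply_ite]
    rw [vec_cfc_mul, hsum, ← hblock, smul_smul, inv_mul_cancel₀ (by exact_mod_cast (hβ k).ne'),
      one_smul]

section UnitaryGroup

variable {α m n : Type*} [CommRing α] [StarRing α] [Fintype m] [DecidableEq m] [Fintype n]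
  [DecidableEq n]

lemma mem_unitaryGroup_of_isHermitian_of_mul_self {W : Matrix n n α} (hW : W.IsHermitian)
    (hW2 : W * W = 1) : W ∈ unitaryGroup n α := by
  rw [mem_unitaryGroup_iff', star_eq_conjTranspose, hW.eq, hW2]

lemma commute_mul_conjTranspose_of_mul_mul_eq {B : Matrix n n α} {R : Matrix m m α}
    {X : Matrix n m α} (hB : B ∈ unitaryGroup n α) (hR : R ∈ unitaryGroup m α)
    (h : B * X * R = X) : Commute (X * Xᴴ) B := by
  have hR' : R * Rᴴ = 1 := mem_unitaryGroup_iff.mp hR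
  have hB' : Bᴴ * B = 1 := mem_unitaryGroup_iff'.mp hB
  have hXB : Xᴴ * B = Rᴴ * Xᴴ := by
    conv_lhs => rw [← h]
    rw [conjTranspose_mul, conjTranspose_mul, Matrix.mul_assoc, Matrix.mul_assoc, hB',
      Matrix.mul_one]
  calc X * Xᴴ * B = X * (Rᴴ * Xᴴ) := by rw [Matrix.mul_assoc, hXB]
    _ = B * X * R * (Rᴴ * Xᴴ) := by rw [h]
    _ = B * (X * Xᴴ) := by
      rw [Matrix.mul_assoc, ← Matrix.mul_assoc R, hR', Matrix.one_mul, Matrix.mul_assoc]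

end UnitaryGroup

open scoped ComplexOrder in
lemma mulVec_eq_self_of_star_dotProduct_mulVec_eq_one {ι : Type*} [Fintype ι] [DecidableEq ι]
    {W : Matrix ι ι ℂ} (hW : W ∈ unitaryGroup ι ℂ) {ψ : ι → ℂ} (hψ : star ψ ⬝ᵥ ψ = 1)
    (h : star ψ ⬝ᵥ (W *ᵥ ψ) = 1) : W *ᵥ ψ = ψ := by
  have hWW : star (W *ᵥ ψ) ⬝ᵥ (W *ᵥ ψ) = 1 := by
    rw [star_mulVec, ← dotProduct_mulVec, mulVec_mulVec, ← star_eq_conjTranspose,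
      mem_unitaryGroup_iff'.mp hW, one_mulVec, hψ]
  have hWψ : star (W *ᵥ ψ) ⬝ᵥ ψ = 1 := by
    rw [star_dotProduct, h, star_one]
  rw [← sub_eq_zero, ← dotProduct_star_self_eq_zero, star_sub, sub_dotProduct, dotProduct_sub,
    dotProduct_sub, hWW, hWψ, h, hψ, sub_self]

/-- structure theorem for PQSS: every perfect quantum solution state is a
combination `ψ = Σ_k β_k ψ_k` of pairwise orthogonal maximally entangled unit vectors `ψ_k`,
each of which is itself a perfect solution state for the same observables, with `β_k > 0`,
`Σ_k β_k² = 1`, and pairwise distinct Schmidt coefficients `β_k / √(r_k)`. -/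
theorem pqss_structure_theorem
    {m n dA dB : ℕ}
    (A : Fin m → Fin n → Matrix (Fin dA) (Fin dA) ℂ)
    (B : Fin m → Fin n → Matrix (Fin dB) (Fin dB) ℂ)
    (ψ : Fin dA × Fin dB → ℂ)
    (h : IsPerfectStrategy A B ψ) :
    ∃ (K : ℕ) (_ : 1 ≤ K) (β : Fin K → ℝ) (r : Fin K → ℕ)
      (u : (Σ k : Fin K, Fin (r k)) → Fin dA → ℂ)
      (v : (Σ k : Fin K, Fin (r k)) → Fin dB → ℂ)
      (Ψ : Fin K → Fin dA × Fin dB → ℂ),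
      (∀ k, 0 < β k) ∧
      (∑ k, (β k) ^ 2 = 1) ∧
      (∀ k, 0 < r k) ∧
      (∀ l l', star (u l) ⬝ᵥ u l' = if l = l' then 1 else 0) ∧
      (∀ l l', star (v l) ⬝ᵥ v l' = if l = l' then 1 else 0) ∧
      (∀ k k', star (Ψ k) ⬝ᵥ Ψ k' = if k = k' then 1 else 0) ∧
      (ψ = ∑ k, (β k : ℂ) • Ψ k) ∧
      (∀ k, Ψ k = ((Real.sqrt (r k) : ℂ))⁻¹ •
        ∑ l : Fin (r k), fun p : Fin dA × Fin dB => u ⟨k, l⟩ p.1 * v ⟨k, l⟩ p.2) ∧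
      (∀ k k', β k / Real.sqrt (r k) = β k' / Real.sqrt (r k') → k = k') ∧
      (∀ k i j, star (Ψ k) ⬝ᵥ ((A i j ⊗ₖ B i j) *ᵥ Ψ k) = 1) := by
  obtain ⟨hAH, hA2, -, -, hBH, hB2, -, -, hψ, hperf⟩ := h
  have hA : ∀ i j, A i j ∈ unitaryGroup (Fin dA) ℂ := fun i j =>
    mem_unitaryGroup_of_isHermitian_of_mul_self (hAH i j) (hA2 i j)
  have hB : ∀ i j, B i j ∈ unitaryGroup (Fin dB) ℂ := fun i j =>
    mem_unitaryGroup_of_isHermitian_of_mul_self (hBH i j) (hB2 i j)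
  -- Mathlib's `vec` stacks columns, so `ψ` is `vec` of the Bob × Alice coefficient matrix.
  set X : Matrix (Fin dB) (Fin dA) ℂ := of fun b a => ψ (a, b)
  have hfix : ∀ i j, B i j * X * (A i j)ᵀ = X := fun i j => vec_inj.mp <| by
    rw [← kronecker_mulVec_vec]
    exact mulVec_eq_self_of_star_dotProduct_mulVec_eq_one
      (kronecker_mem_unitary (hA i j) (hB i j)) hψ (hperf i j)
  obtain ⟨K, hK, β, r, u, v, hβ, hsq, hr, hu, hv, hdecomp, hdistinct, hproj⟩ :=
    exists_maximallyEntangled_decomposition X hψ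
  have hΨ := star_maximallyEntangledState_dotProduct hr hu hv
  refine ⟨K, hK, β, r, u, v, maximallyEntangledState u v, hβ, hsq, hr, hu, hv, hΨ, hdecomp,
    fun k => rfl, hdistinct, fun k i j => ?_⟩
  obtain ⟨g, hg⟩ := hproj k
  have hcomm : Commute (cfc g (X * Xᴴ)) (B i j) :=
    (commute_mul_conjTranspose_of_mul_mul_eq (hB i j)
      (transpose_mem_unitaryGroup_iff.mpr (hA i j)) (hfix i j)).cfc_real g
  have hfixk :
      (A i j ⊗ₖ B i j) *ᵥ maximallyEntangledState u v k = maximallyEntangledState u v k := by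
    rw [hg, mulVec_smul, kronecker_mulVec_vec, ← Matrix.mul_assoc (B i j), ← hcomm.eq,
      Matrix.mul_assoc, Matrix.mul_assoc, ← Matrix.mul_assoc (B i j), hfix i j]
  rw [hfixk, hΨ, if_pos rfl]
end

section
/- Let (A_{ij}), (B_{ij}), ψ be a perfect strategy for the 3×3 quantum magic square game of local dimensions (d_A,d_B). Then the Schmidt rank of ψ is at least 4; that is, writing ψ = Σ_{p=1}^{d_A} Σ_{q=1}^{d_B} M_{pq} e_p ⊗ f_q in the standard bases, the d_A×d_B matrix M has rank at least 4. -/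
open Matrix Kronecker

/-!
Each `A i j ⊗ B i j` is a Hermitian unitary with expectation `1` in the unit vector `ψ`, so it
fixes `ψ`. Writing `ψ = vec N`, this says `B i j * N = N * (A i j)ᵀ`. Hence the range `V` of `N`,
whose dimension is the Schmidt rank, is invariant under Bob's observables, and on `V` they satisfy
Alice's row relations besides their own column relations: restricted to `V` they form a magic
square whose rows and columns all commute. In such a square the Mermin–Peres computation forces
`x 0 1, x 1 0` and `x 0 0, x 1 1` to anticommute, so `x 0 0`, `x 0 1` and `x 0 0 * x 0 1` are
traceless, and the trace of the projection `(1 + x 0 0) (1 + x 0 1) / 4` shows that `4 ∣ dim V`.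
Since `ψ ≠ 0`, `dim V ≥ 4`.
-/

open Module LinearMap

structure IsMagicSquare {R : Type*} [Ring R] (x : Fin 3 → Fin 3 → R) : Prop where
  mul_self : ∀ i j, x i j * x i j = 1
  row_commute : ∀ i j j', Commute (x i j) (x i j')
  col_commute : ∀ i i' j, Commute (x i j) (x i' j)
  row_prod : ∀ i, x i 0 * x i 1 * x i 2 = 1
  col_prod : ∀ j, x 0 j * x 1 j * x 2 j = -1

theorem eq_mul_mul_of_mul_mul_eq {M : Type*} [Monoid M] {u v w t : M} (hu : u * u = 1)
    (hv : v * v = 1) (h : u * v * w = t) : w = v * u * t := by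
  rw [← h, mul_assoc v, ← mul_assoc u, ← mul_assoc u, ← mul_assoc, ← mul_assoc, hu, mul_one, hv,
    one_mul]

namespace IsMagicSquare

theorem anticomm {R : Type*} [Ring R] {x : Fin 3 → Fin 3 → R} (hx : IsMagicSquare x) :
    x 0 1 * x 1 0 = -(x 1 0 * x 0 1) ∧ x 0 0 * x 1 1 = -(x 1 1 * x 0 0) := by
  have hunit : ∀ i j, IsUnit (x i j) := fun i j =>
    (Units.mk _ _ (hx.mul_self i j) (hx.mul_self i j)).isUnit
  have solve : ∀ {i j i' j'} {w t : R}, x i j * x i' j' * w = t → w = x i' j' * x i j * t :=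
    eq_mul_mul_of_mul_mul_eq (hx.mul_self _ _) (hx.mul_self _ _)
  have h02 := solve (hx.row_prod 0)
  have h12 := solve (hx.row_prod 1)
  have h20 := solve (hx.col_prod 0)
  have h21 := solve (hx.col_prod 1)
  -- the corner entry `x 2 2`, solved for along its row and along its column
  have hk : x 2 1 * x 2 0 = -(x 1 2 * x 0 2) := by
    simpa using (solve (hx.row_prod 2)).symm.trans (solve (hx.col_prod 2))
  have hk' : x 2 0 * x 2 1 = -(x 1 2 * x 0 2) := (hx.row_commute 2 0 1).eq.trans hk
  rw [h02, h12, h20, h21] at hk hk'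
  constructor
  · refine (hunit 1 1).mul_left_cancel ((hunit 0 0).mul_right_cancel ?_)
    simpa [mul_assoc] using hk
  · rw [(hx.row_commute 1 1 0).eq, (hx.row_commute 0 1 0).eq] at hk'
    refine (hunit 1 0).mul_left_cancel ((hunit 0 1).mul_right_cancel ?_)
    simpa [mul_assoc] using hk'

end IsMagicSquare

section Trace

variable {K V : Type*} [Field K] [CharZero K] [AddCommGroup V] [Module K V]

theorem trace_eq_zero_of_mul_eq_neg_mul {f u : End K V} (hu : u * u = 1) (h : f * u = -(u * f)) :
    trace K V f = 0 := by
  have : trace K V f = -trace K V f := by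
    calc trace K V f = trace K V (f * u * u) := by rw [mul_assoc, hu, mul_one]
      _ = trace K V (u * (f * u)) := trace_mul_comm K _ _
      _ = -trace K V f := by rw [h, mul_neg, ← mul_assoc, hu, one_mul, map_neg]
  exact CharZero.eq_neg_self_iff.mp this

theorem isIdempotentElem_half_one_add {a : End K V} (ha : a * a = 1) :
    IsIdempotentElem ((2⁻¹ : K) • (1 + a)) := by
  have hsq : (1 + a) * (1 + a) = (2 : K) • (1 + a) := by
    simp only [mul_add, add_mul, one_mul, mul_one, ha, two_smul]
    abel
  rw [IsIdempotentElem, smul_mul_smul_comm, hsq, smul_smul]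
  norm_num

theorem IsMagicSquare.four_dvd_finrank [FiniteDimensional K V] {x : Fin 3 → Fin 3 → End K V}
    (hx : IsMagicSquare x) : 4 ∣ finrank K V := by
  obtain ⟨hbd, hae⟩ := hx.anticomm
  have hcomm : Commute (1 + x 0 0) (1 + x 0 1) :=
    (Commute.one_right _).add_right ((Commute.one_left _).add_left (hx.row_commute 0 0 1))
  have hP := (isIdempotentElem_half_one_add (hx.mul_self 0 0)).mul_of_commute
    ((hcomm.smul_left _).smul_right _) (isIdempotentElem_half_one_add (hx.mul_self 0 1))
  have htr_a : trace K V (x 0 0) = 0 := trace_eq_zero_of_mul_eq_neg_mul (hx.mul_self 1 1) hae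
  have htr_b : trace K V (x 0 1) = 0 := trace_eq_zero_of_mul_eq_neg_mul (hx.mul_self 1 0) hbd
  have htr_ab : trace K V (x 0 0 * x 0 1) = 0 := by
    refine trace_eq_zero_of_mul_eq_neg_mul (hx.mul_self 1 0) ?_
    rw [mul_assoc, hbd, mul_neg, ← mul_assoc, (hx.col_commute 0 1 0).eq, mul_assoc]
  set P := (2⁻¹ : K) • (1 + x 0 0) * (2⁻¹ : K) • (1 + x 0 1)
  have htrP : trace K V P = 4⁻¹ * finrank K V := by
    simp only [P, smul_mul_smul_comm, map_smul, mul_add, add_mul, one_mul, mul_one, map_add, htr_a,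
      htr_b, htr_ab, trace_one, smul_eq_mul]
    norm_num
  have h : (finrank K V : K) = 4 * finrank K (range P) := by
    rw [← (LinearMap.IsIdempotentElem.isProj_range _ hP).trace, htrP]
    ring
  exact Dvd.intro _ (by exact_mod_cast h.symm)

end Trace

open scoped ComplexOrder in
theorem mulVec_eq_self_of_star_dotProduct_mulVec_eq_one_s8 {𝕜 n : Type*} [RCLike 𝕜] [Fintype n]
    [DecidableEq n] {U : Matrix n n 𝕜} {v : n → 𝕜} (hU : Uᴴ * U = 1) (hv : star v ⬝ᵥ v = 1)
    (h : star v ⬝ᵥ (U *ᵥ v) = 1) : U *ᵥ v = v := by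
  have hUU : star (U *ᵥ v) ⬝ᵥ (U *ᵥ v) = 1 := by
    rw [star_mulVec, ← dotProduct_mulVec, mulVec_mulVec, hU, one_mulVec, hv]
  have hUv : star (U *ᵥ v) ⬝ᵥ v = 1 := by
    rw [star_dotProduct, h, star_one]
  rw [← sub_eq_zero, ← dotProduct_star_self_eq_zero, star_sub, sub_dotProduct, dotProduct_sub,
    dotProduct_sub, hUU, hUv, h, hv]
  simp

namespace Matrix

variable {K m n : Type*}

def unvec (v : n × m → K) : Matrix m n K := of fun i j => v (j, i)

theorem vec_unvec (v : n × m → K) : vec (unvec v) = v := rfl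

theorem rank_pos_of_ne_zero [Field K] [Fintype n] [DecidableEq n] {N : Matrix m n K}
    (hN : N ≠ 0) : 0 < N.rank := by
  refine Submodule.one_le_finrank_iff.mpr ?_
  rwa [ne_eq, ← toLin'_apply', range_eq_bot, LinearEquiv.map_eq_zero_iff]

variable [Fintype m] [Fintype n]

theorem mulVecLin_apply_mem_range [CommSemiring K] {N : Matrix m n K} {X : Matrix m m K}
    {Y : Matrix n n K} (h : X * N = N * Y) :
    ∀ v ∈ range N.mulVecLin, X.mulVecLin v ∈ range N.mulVecLin := by
  rintro _ ⟨y, rfl⟩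
  exact ⟨Y *ᵥ y, by simp [mulVec_mulVec, h]⟩

theorem isMagicSquare_restrict_range [CommRing K] {x : Fin 3 → Fin 3 → Matrix m m K}
    {N : Matrix m n K}
    (hx : ∀ i j, ∀ v ∈ range N.mulVecLin, (x i j).mulVecLin v ∈ range N.mulVecLin)
    (mul_self : ∀ i j, x i j * (x i j * N) = N)
    (row_commute : ∀ i j j', x i j * (x i j' * N) = x i j' * (x i j * N))
    (col_commute : ∀ i i' j, x i j * (x i' j * N) = x i' j * (x i j * N))
    (row_prod : ∀ i, x i 0 * (x i 1 * (x i 2 * N)) = N)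
    (col_prod : ∀ j, x 0 j * (x 1 j * (x 2 j * N)) = -N) :
    IsMagicSquare fun i j => (x i j).mulVecLin.restrict (hx i j) := by
  have ext_range : ∀ {f g : End K (range N.mulVecLin)},
      (∀ y, (f ⟨N *ᵥ y, y, rfl⟩ : m → K) = g ⟨N *ᵥ y, y, rfl⟩) → f = g :=
    fun h => LinearMap.ext fun ⟨_, y, hy⟩ => Subtype.ext (hy ▸ h y)
  refine ⟨fun i j => ext_range fun y => ?_, fun i j j' => ext_range fun y => ?_,
    fun i i' j => ext_range fun y => ?_, fun i => ext_range fun y => ?_,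
    fun j => ext_range fun y => ?_⟩ <;>
  simp only [Module.End.mul_apply, Module.End.one_apply, LinearMap.neg_apply,
    LinearMap.restrict_apply, Submodule.coe_neg, mulVecLin_apply, mulVec_mulVec]
  · rw [mul_self]
  · rw [row_commute]
  · rw [col_commute]
  · rw [row_prod]
  · rw [col_prod, neg_mulVec]

end Matrix

namespace IsPerfectStrategy

variable {m n : ℕ} {ιA ιB : Type*} [Fintype ιA] [DecidableEq ιA] [Fintype ιB] [DecidableEq ιB]
  {ψ : ιA × ιB → ℂ}

theorem kronecker_mulVec_eq_self {A : Fin m → Fin n → Matrix ιA ιA ℂ}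
    {B : Fin m → Fin n → Matrix ιB ιB ℂ} (h : IsPerfectStrategy A B ψ) (i : Fin m) (j : Fin n) :
    (A i j ⊗ₖ B i j) *ᵥ ψ = ψ := by
  obtain ⟨hAH, hA2, -, -, hBH, hB2, -, -, hψ, hperf⟩ := h
  refine mulVec_eq_self_of_star_dotProduct_mulVec_eq_one_s8 ?_ hψ (hperf i j)
  rw [conjTranspose_kronecker, hAH i j, hBH i j, ← mul_kronecker_mul, hA2, hB2, one_kronecker_one]

theorem mul_unvec {A : Fin m → Fin n → Matrix ιA ιA ℂ} {B : Fin m → Fin n → Matrix ιB ιB ℂ}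
    (h : IsPerfectStrategy A B ψ) (i : Fin m) (j : Fin n) :
    B i j * unvec ψ = unvec ψ * (A i j)ᵀ := by
  have hfix : B i j * unvec ψ * (A i j)ᵀ = unvec ψ := by
    rw [← vec_inj, ← kronecker_mulVec_vec, vec_unvec]
    exact h.kronecker_mulVec_eq_self i j
  obtain ⟨-, hA2, -⟩ := h
  calc B i j * unvec ψ = B i j * unvec ψ * (A i j)ᵀ * (A i j)ᵀ := by
        rw [Matrix.mul_assoc _ (A i j)ᵀ, ← transpose_mul, hA2 i j, transpose_one, Matrix.mul_one]
    _ = unvec ψ * (A i j)ᵀ := by rw [hfix]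

theorem unvec_ne_zero {A : Fin m → Fin n → Matrix ιA ιA ℂ} {B : Fin m → Fin n → Matrix ιB ιB ℂ}
    (h : IsPerfectStrategy A B ψ) : unvec ψ ≠ 0 := by
  obtain ⟨-, -, -, -, -, -, -, -, hψ, -⟩ := h
  intro h0
  rw [← vec_unvec ψ, h0, vec_zero] at hψ
  simp at hψ

theorem isMagicSquare_restrict {A : Fin 3 → Fin 3 → Matrix ιA ιA ℂ}
    {B : Fin 3 → Fin 3 → Matrix ιB ιB ℂ} (h : IsPerfectStrategy A B ψ) :
    IsMagicSquare fun i j =>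
      (B i j).mulVecLin.restrict (mulVecLin_apply_mem_range (h.mul_unvec i j)) := by
  have hBN : ∀ i j (X : Matrix ιA ιA ℂ), B i j * (unvec ψ * X) = unvec ψ * ((A i j)ᵀ * X) :=
    fun i j X => by rw [← Matrix.mul_assoc, h.mul_unvec, Matrix.mul_assoc]
  obtain ⟨-, -, hAc, hAp, -, hB2, hBc, hBp, -, -⟩ := h
  -- transposition reverses the order of Alice's row products
  have hArev : ∀ i, A i 2 * A i 1 * A i 0 = 1 := fun i => by
    rw [hAc i 2 1, Matrix.mul_assoc, hAc i 2 0, ← Matrix.mul_assoc, hAc i 1 0]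
    simpa [List.ofFn_succ, Matrix.mul_assoc] using hAp i
  refine isMagicSquare_restrict_range _ (fun i j => ?_) (fun i j j' => ?_) (fun i i' j => ?_)
    (fun i => ?_) (fun j => ?_)
  · rw [← Matrix.mul_assoc, hB2, Matrix.one_mul]
  · rw [← Matrix.mul_one (unvec ψ), hBN, hBN, hBN, hBN, Matrix.mul_one, Matrix.mul_one,
      ← transpose_mul, ← transpose_mul, hAc]
  · rw [← Matrix.mul_assoc, hBc, Matrix.mul_assoc]
  · rw [← Matrix.mul_one (unvec ψ), hBN, hBN, hBN, Matrix.mul_one, ← transpose_mul,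
      ← transpose_mul, hArev, transpose_one]
  · have hcol : B 0 j * (B 1 j * B 2 j) = -1 := by simpa [List.ofFn_succ] using hBp j
    rw [← Matrix.mul_assoc, ← Matrix.mul_assoc, Matrix.mul_assoc (B 0 j), hcol, Matrix.neg_mul,
      Matrix.one_mul]

end IsPerfectStrategy

/-- the Schmidt rank of any perfect quantum solution state of the `3 × 3`
quantum magic square game is at least `4`: the coefficient matrix `M p q = ψ (p, q)` has
rank at least `4`. -/
theorem magic_square_pqss_schmidt_rank_ge_four
    {dA dB : ℕ}
    (A : Fin 3 → Fin 3 → Matrix (Fin dA) (Fin dA) ℂ)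
    (B : Fin 3 → Fin 3 → Matrix (Fin dB) (Fin dB) ℂ)
    (ψ : Fin dA × Fin dB → ℂ)
    (h : IsPerfectStrategy A B ψ) :
    4 ≤ (Matrix.of fun (p : Fin dA) (q : Fin dB) => ψ (p, q)).rank := by
  change 4 ≤ (unvec ψ)ᵀ.rank
  rw [rank_transpose]
  exact Nat.le_of_dvd (rank_pos_of_ne_zero h.unvec_ne_zero)
    h.isMagicSquare_restrict.four_dvd_finrank
end

section
/- Let H be a finite-dimensional complex inner product space and let V₁, V₂, W_a, W_b be subspaces of H such that V₁ is orthogonal to V₂ and W_a is orthogonal to W_b. Then ((V₁ ∩ W_a) + (V₂ ∩ W_b)) ∩ ((V₁ ∩ W_b) + (V₂ ∩ W_a)) = {0}. -/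
open Submodule

/-- Each of `V₁ ⊓ W_a`, `V₂ ⊓ W_b` meets each of `V₁ ⊓ W_b`, `V₂ ⊓ W_a` in one orthogonal pair,
`V₁ ⟂ V₂` or `W_a ⟂ W_b`. -/
theorem Submodule.IsOrtho.sup_inf_isOrtho_sup_inf {𝕜 E : Type*} [RCLike 𝕜]
    [NormedAddCommGroup E] [InnerProductSpace 𝕜 E] {V₁ V₂ Wa Wb : Submodule 𝕜 E}
    (hV : V₁ ⟂ V₂) (hW : Wa ⟂ Wb) :
    V₁ ⊓ Wa ⊔ V₂ ⊓ Wb ⟂ V₁ ⊓ Wb ⊔ V₂ ⊓ Wa :=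
  isOrtho_sup_left.mpr
    ⟨isOrtho_sup_right.mpr ⟨hW.mono inf_le_right inf_le_right, hV.mono inf_le_left inf_le_left⟩,
      isOrtho_sup_right.mpr
        ⟨hV.symm.mono inf_le_left inf_le_left, hW.symm.mono inf_le_right inf_le_right⟩⟩

theorem minimal_setup_no_go_general
    {H : Type*} [NormedAddCommGroup H] [InnerProductSpace ℂ H]
    (V1 V2 Wa Wb : Submodule ℂ H)
    (hV : ∀ v ∈ V1, ∀ w ∈ V2, (inner ℂ v w : ℂ) = 0)
    (hW : ∀ v ∈ Wa, ∀ w ∈ Wb, (inner ℂ v w : ℂ) = 0) :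
    ((V1 ⊓ Wa) ⊔ (V2 ⊓ Wb)) ⊓ ((V1 ⊓ Wb) ⊔ (V2 ⊓ Wa)) = ⊥ :=
  (IsOrtho.sup_inf_isOrtho_sup_inf (isOrtho_iff_inner_eq.mpr hV)
    (isOrtho_iff_inner_eq.mpr hW)).disjoint.eq_bot

/-- no-go lemma for the minimal setup: if `V₁ ⟂ V₂` and `W_a ⟂ W_b` are
subspaces of a finite-dimensional complex inner product space, then
`((V₁ ∩ W_a) + (V₂ ∩ W_b)) ∩ ((V₁ ∩ W_b) + (V₂ ∩ W_a)) = {0}`. -/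
theorem minimal_setup_no_go
    {H : Type*} [NormedAddCommGroup H] [InnerProductSpace ℂ H] [FiniteDimensional ℂ H]
    (V1 V2 Wa Wb : Submodule ℂ H)
    (hV : ∀ v ∈ V1, ∀ w ∈ V2, (inner ℂ v w : ℂ) = 0)
    (hW : ∀ v ∈ Wa, ∀ w ∈ Wb, (inner ℂ v w : ℂ) = 0) :
    ((V1 ⊓ Wa) ⊔ (V2 ⊓ Wb)) ⊓ ((V1 ⊓ Wb) ⊔ (V2 ⊓ Wa)) = ⊥ :=
  minimal_setup_no_go_general V1 V2 Wa Wb hV hW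
end

section
/- Let H be a finite-dimensional complex inner product space and let V₁, V₂, W_a, W_b, X_α, X_β be subspaces of H such that V₁ ⟂ V₂, W_a ⟂ W_b, and X_α ⟂ X_β (orthogonal pairs). Then ((V₁ ∩ W_a) + (V₂ ∩ W_b)) ∩ ((W_b ∩ X_α) + (W_a ∩ X_β)) ∩ ((V₁ ∩ X_α) + (V₂ ∩ X_β)) = {0}. -/
/-!
Write `x = a + b = c + d = e + f` along the three sums, summands in the order given. Orthogonal
subspaces are independent, so a decomposition along `W_a ⊕ W_b` is unique, which gives `a = d`
and `b = c`; likewise `V₁ ⊕ V₂` gives `a = e` and `b = f`. Hence both `a` and `b` lie in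
`X_α ∩ X_β = 0`.
-/

theorem Submodule.eq_of_add_eq_add_of_disjoint {R M : Type*} [Ring R] [AddCommGroup M] [Module R M]
    {U V : Submodule R M} (h : Disjoint U V) {u u' v v' : M} (hu : u ∈ U) (hu' : u' ∈ U)
    (hv : v ∈ V) (hv' : v' ∈ V) (huv : u + v = u' + v') : u = u' ∧ v = v' := by
  have hdiff : u - u' = v' - v := by rw [sub_eq_sub_iff_add_eq_add, huv, add_comm]
  have hu_eq : u - u' = 0 :=
    Submodule.disjoint_def.mp h _ (U.sub_mem hu hu') (hdiff ▸ V.sub_mem hv' hv)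
  obtain rfl := sub_eq_zero.mp hu_eq
  exact ⟨rfl, add_left_cancel huv⟩

theorem reduced_setup_no_go_general
    {H : Type*} [NormedAddCommGroup H] [InnerProductSpace ℂ H]
    (V1 V2 Wa Wb Xa Xb : Submodule ℂ H)
    (hV : ∀ v ∈ V1, ∀ w ∈ V2, (inner ℂ v w : ℂ) = 0)
    (hW : ∀ v ∈ Wa, ∀ w ∈ Wb, (inner ℂ v w : ℂ) = 0)
    (hX : ∀ v ∈ Xa, ∀ w ∈ Xb, (inner ℂ v w : ℂ) = 0) :
    ((V1 ⊓ Wa) ⊔ (V2 ⊓ Wb)) ⊓ ((Wb ⊓ Xa) ⊔ (Wa ⊓ Xb)) ⊓ ((V1 ⊓ Xa) ⊔ (V2 ⊓ Xb)) = ⊥ := by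
  have hV' := (Submodule.isOrtho_iff_inner_eq.mpr hV).disjoint
  have hW' := (Submodule.isOrtho_iff_inner_eq.mpr hW).disjoint
  have hX' := Submodule.disjoint_def.mp (Submodule.isOrtho_iff_inner_eq.mpr hX).disjoint
  rw [eq_bot_iff]
  rintro x ⟨⟨hx₁, hx₂⟩, hx₃⟩
  obtain ⟨a, ⟨haV1, haWa⟩, b, ⟨hbV2, hbWb⟩, rfl⟩ := Submodule.mem_sup.mp hx₁
  obtain ⟨c, ⟨hcWb, hcXa⟩, d, ⟨hdWa, hdXb⟩, hcd⟩ := Submodule.mem_sup.mp hx₂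
  obtain ⟨e, ⟨heV1, heXa⟩, f, ⟨hfV2, hfXb⟩, hef⟩ := Submodule.mem_sup.mp hx₃
  obtain ⟨rfl, rfl⟩ := Submodule.eq_of_add_eq_add_of_disjoint hW' haWa hdWa hbWb hcWb
    (hcd.symm.trans (add_comm c d))
  obtain ⟨rfl, rfl⟩ := Submodule.eq_of_add_eq_add_of_disjoint hV' haV1 heV1 hbV2 hfV2 hef.symm
  rw [hX' _ heXa hdXb, hX' _ hcXa hfXb, add_zero]
  exact zero_mem _

/-- no-go lemma for the three-identity reduced setup: if `V₁ ⟂ V₂`,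
`W_a ⟂ W_b` and `X_α ⟂ X_β` are subspaces of a finite-dimensional complex inner product
space, then
`((V₁∩W_a)+(V₂∩W_b)) ∩ ((W_b∩X_α)+(W_a∩X_β)) ∩ ((V₁∩X_α)+(V₂∩X_β)) = {0}`. -/
theorem reduced_setup_no_go
    {H : Type*} [NormedAddCommGroup H] [InnerProductSpace ℂ H] [FiniteDimensional ℂ H]
    (V1 V2 Wa Wb Xa Xb : Submodule ℂ H)
    (hV : ∀ v ∈ V1, ∀ w ∈ V2, (inner ℂ v w : ℂ) = 0)
    (hW : ∀ v ∈ Wa, ∀ w ∈ Wb, (inner ℂ v w : ℂ) = 0)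
    (hX : ∀ v ∈ Xa, ∀ w ∈ Xb, (inner ℂ v w : ℂ) = 0) :
    ((V1 ⊓ Wa) ⊔ (V2 ⊓ Wb)) ⊓ ((Wb ⊓ Xa) ⊔ (Wa ⊓ Xb)) ⊓ ((V1 ⊓ Xa) ⊔ (V2 ⊓ Xb)) = ⊥ :=
  reduced_setup_no_go_general V1 V2 Wa Wb Xa Xb hV hW hX
end

section
/- Let E₁, E₂, E_a, E_b be complex d_A×d_A orthogonal projection matrices with E₁E₂ = 0 and E_aE_b = 0, and let F₁, F₂, F_a, F_b be complex d_B×d_B orthogonal projection matrices with F₁F₂ = 0 and F_aF_b = 0. If a vector ψ ∈ ℂ^{d_A·d_B} lies in range(E₁⊗F₁ + E₂⊗F₂) ∩ range(E₁⊗F_a + E₂⊗F_b) ∩ range(E_a⊗F₂ + E_b⊗F₁) ∩ range(E_a⊗F_a + E_b⊗F_b), where ⊗ is the Kronecker product, then ψ = 0. -/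
open Matrix Kronecker

private lemma proj_fix {n : Type*} [Fintype n] [DecidableEq n]
    (P : Matrix n n ℂ) (hP : P * P = P) (ψ : n → ℂ)
    (h : ψ ∈ Set.range P.mulVec) : P.mulVec ψ = ψ := by
  obtain ⟨x, hx⟩ := h
  rw [← hx, Matrix.mulVec_mulVec, hP]

private lemma transfer {n : Type*} [Fintype n]
    (A B P : Matrix n n ℂ) (ψ : n → ℂ)
    (hψ : P.mulVec ψ = ψ) (h : A * P = B * P) :
    A.mulVec ψ = B.mulVec ψ := by
  conv_lhs => rw [← hψ, Matrix.mulVec_mulVec, h, ← Matrix.mulVec_mulVec, hψ]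

/-- invalidity of the minimal operator setup of the `3 × 3` game: for
mutually orthogonal projection pairs `E₁,E₂`, `E_a,E_b` on `ℂ^{d_A}` and `F₁,F₂`, `F_a,F_b`
on `ℂ^{d_B}`, any vector lying in the intersection of the ranges of `E₁⊗F₁+E₂⊗F₂`,
`E₁⊗F_a+E₂⊗F_b`, `E_a⊗F₂+E_b⊗F₁` and `E_a⊗F_a+E_b⊗F_b` is zero. -/
theorem minimal_operator_setup_invalid
    {dA dB : ℕ}
    (E1 E2 Ea Eb : Matrix (Fin dA) (Fin dA) ℂ)
    (hE1 : E1.IsHermitian) (hE1p : E1 * E1 = E1)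
    (hE2 : E2.IsHermitian) (hE2p : E2 * E2 = E2)
    (hEa : Ea.IsHermitian) (hEap : Ea * Ea = Ea)
    (hEb : Eb.IsHermitian) (hEbp : Eb * Eb = Eb)
    (hE12 : E1 * E2 = 0) (hEab : Ea * Eb = 0)
    (F1 F2 Fa Fb : Matrix (Fin dB) (Fin dB) ℂ)
    (hF1 : F1.IsHermitian) (hF1p : F1 * F1 = F1)
    (hF2 : F2.IsHermitian) (hF2p : F2 * F2 = F2)
    (hFa : Fa.IsHermitian) (hFap : Fa * Fa = Fa)
    (hFb : Fb.IsHermitian) (hFbp : Fb * Fb = Fb)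
    (hF12 : F1 * F2 = 0) (hFab : Fa * Fb = 0)
    (ψ : Fin dA × Fin dB → ℂ)
    (h1 : ψ ∈ Set.range ((E1 ⊗ₖ F1 + E2 ⊗ₖ F2).mulVec))
    (h2 : ψ ∈ Set.range ((E1 ⊗ₖ Fa + E2 ⊗ₖ Fb).mulVec))
    (h3 : ψ ∈ Set.range ((Ea ⊗ₖ F2 + Eb ⊗ₖ F1).mulVec))
    (h4 : ψ ∈ Set.range ((Ea ⊗ₖ Fa + Eb ⊗ₖ Fb).mulVec)) :
    ψ = 0 := by
  -- reversed orthogonality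
  have hE21 : E2 * E1 = 0 := by
    have := congrArg Matrix.conjTranspose hE12
    simpa [Matrix.conjTranspose_mul, hE1.eq, hE2.eq] using this
  have hEba : Eb * Ea = 0 := by
    have := congrArg Matrix.conjTranspose hEab
    simpa [Matrix.conjTranspose_mul, hEa.eq, hEb.eq] using this
  have hF21 : F2 * F1 = 0 := by
    have := congrArg Matrix.conjTranspose hF12
    simpa [Matrix.conjTranspose_mul, hF1.eq, hF2.eq] using this
  have hFba : Fb * Fa = 0 := by
    have := congrArg Matrix.conjTranspose hFab
    simpa [Matrix.conjTranspose_mul, hFa.eq, hFb.eq] using this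
  -- the four operators are projections
  set P1 := E1 ⊗ₖ F1 + E2 ⊗ₖ F2 with hP1def
  set P2 := E1 ⊗ₖ Fa + E2 ⊗ₖ Fb with hP2def
  set P3 := Ea ⊗ₖ F2 + Eb ⊗ₖ F1 with hP3def
  set P4 := Ea ⊗ₖ Fa + Eb ⊗ₖ Fb with hP4def
  have hψ1 : P1.mulVec ψ = ψ := proj_fix _ (by
    simp [hP1def, add_mul, mul_add, ← Matrix.mul_kronecker_mul, hE1p, hE2p, hF1p, hF2p,
      hE12, hE21]) ψ h1
  have hψ2 : P2.mulVec ψ = ψ := proj_fix _ (by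
    simp [hP2def, add_mul, mul_add, ← Matrix.mul_kronecker_mul, hE1p, hE2p, hFap, hFbp,
      hE12, hE21]) ψ h2
  have hψ3 : P3.mulVec ψ = ψ := proj_fix _ (by
    simp [hP3def, add_mul, mul_add, ← Matrix.mul_kronecker_mul, hEap, hEbp, hF1p, hF2p,
      hEab, hEba]) ψ h3
  have hψ4 : P4.mulVec ψ = ψ := proj_fix _ (by
    simp [hP4def, add_mul, mul_add, ← Matrix.mul_kronecker_mul, hEap, hEbp, hFap, hFbp,
      hEab, hEba]) ψ h4
  -- chain of equalities
  have c1 : (E1 ⊗ₖ (1 : Matrix (Fin dB) (Fin dB) ℂ)).mulVec ψ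
      = ((1 : Matrix (Fin dA) (Fin dA) ℂ) ⊗ₖ F1).mulVec ψ :=
    transfer _ _ _ _ hψ1 (by
      simp [hP1def, mul_add, ← Matrix.mul_kronecker_mul, hE1p, hE12, hF12, hF1p])
  have c2 : (E1 ⊗ₖ (1 : Matrix (Fin dB) (Fin dB) ℂ)).mulVec ψ
      = ((1 : Matrix (Fin dA) (Fin dA) ℂ) ⊗ₖ Fa).mulVec ψ :=
    transfer _ _ _ _ hψ2 (by
      simp [hP2def, mul_add, ← Matrix.mul_kronecker_mul, hE1p, hE12, hFab, hFap])
  have c3 : (Ea ⊗ₖ (1 : Matrix (Fin dB) (Fin dB) ℂ)).mulVec ψ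
      = ((1 : Matrix (Fin dA) (Fin dA) ℂ) ⊗ₖ Fa).mulVec ψ :=
    transfer _ _ _ _ hψ4 (by
      simp [hP4def, mul_add, ← Matrix.mul_kronecker_mul, hEap, hEab, hFab, hFap])
  have c4 : (Ea ⊗ₖ (1 : Matrix (Fin dB) (Fin dB) ℂ)).mulVec ψ
      = ((1 : Matrix (Fin dA) (Fin dA) ℂ) ⊗ₖ F2).mulVec ψ :=
    transfer _ _ _ _ hψ3 (by
      simp [hP3def, mul_add, ← Matrix.mul_kronecker_mul, hEap, hEab, hF21, hF2p])
  have c5 : (E2 ⊗ₖ (1 : Matrix (Fin dB) (Fin dB) ℂ)).mulVec ψ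
      = ((1 : Matrix (Fin dA) (Fin dA) ℂ) ⊗ₖ F2).mulVec ψ :=
    transfer _ _ _ _ hψ1 (by
      simp [hP1def, mul_add, ← Matrix.mul_kronecker_mul, hE2p, hE21, hF21, hF2p])
  -- every marginal equals v := (1 ⊗ F1) ψ
  set v := ((1 : Matrix (Fin dA) (Fin dA) ℂ) ⊗ₖ F1).mulVec ψ with hvdef
  have hv2 : ((1 : Matrix (Fin dA) (Fin dA) ℂ) ⊗ₖ F2).mulVec ψ = v := by
    rw [← c4, c3, ← c2, c1]
  -- v = 0 since (1⊗F1) v = v and (1⊗F1)(1⊗F2)ψ = 0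
  have hfix : ((1 : Matrix (Fin dA) (Fin dA) ℂ) ⊗ₖ F1).mulVec v = v := by
    rw [hvdef, Matrix.mulVec_mulVec, ← Matrix.mul_kronecker_mul, one_mul, hF1p]
  have hzero : ((1 : Matrix (Fin dA) (Fin dA) ℂ) ⊗ₖ F1).mulVec v = 0 := by
    rw [← hv2, Matrix.mulVec_mulVec, ← Matrix.mul_kronecker_mul, one_mul, hF12]
    simp
  have hv0 : v = 0 := by rw [← hfix, hzero]
  -- ψ = (E1⊗1)ψ + (E2⊗1)ψ = v + v = 0
  have hsplit : ψ = (E1 ⊗ₖ (1 : Matrix (Fin dB) (Fin dB) ℂ)).mulVec ψ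
      + (E2 ⊗ₖ (1 : Matrix (Fin dB) (Fin dB) ℂ)).mulVec ψ := by
    conv_lhs => rw [← hψ1, hP1def, Matrix.add_mulVec]
    have e1 : (E1 ⊗ₖ F1).mulVec ψ
        = (E1 ⊗ₖ (1 : Matrix (Fin dB) (Fin dB) ℂ)).mulVec ψ :=
      transfer _ _ _ _ hψ1 (by
        simp [hP1def, mul_add, ← Matrix.mul_kronecker_mul, hE1p, hE12, hF1p])
    have e2 : (E2 ⊗ₖ F2).mulVec ψ
        = (E2 ⊗ₖ (1 : Matrix (Fin dB) (Fin dB) ℂ)).mulVec ψ :=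
      transfer _ _ _ _ hψ1 (by
        simp [hP1def, mul_add, ← Matrix.mul_kronecker_mul, hE2p, hE21, hF2p])
    rw [e1, e2]
  rw [hsplit, c1, c5, hv2, hv0, add_zero]
end

section
/- In any perfect strategy (A_{ij}), (B_{ij}), ψ for the 3×3 quantum magic square game, no observable is trivial: there is no cell (i,j) with A_{ij} = I or A_{ij} = −I, and no cell (i,j) with B_{ij} = I or B_{ij} = −I. Equivalently, every observable occurring in a perfect strategy of the 3×3 game has both eigenvalues +1 and −1. -/
open Matrix Kronecker

/- ---------------------------------------------------------------------------
Auxiliary machinery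
--------------------------------------------------------------------------- -/

private lemma dot_star_self_eq_zero {ι : Type*} [Fintype ι] {x : ι → ℂ}
    (h : star x ⬝ᵥ x = 0) : x = 0 := by
  have h1 : (↑(∑ i, Complex.normSq (x i)) : ℂ) = 0 := by
    rw [← h]
    simp only [dotProduct, Pi.star_apply, Complex.ofReal_sum,
      Complex.normSq_eq_conj_mul_self]
    rfl
  have h2 : ∑ i, Complex.normSq (x i) = 0 := by exact_mod_cast h1
  have h3 := (Finset.sum_eq_zero_iff_of_nonneg
    (fun i _ => Complex.normSq_nonneg (x i))).mp h2
  funext i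
  exact Complex.normSq_eq_zero.mp (h3 i (Finset.mem_univ i))

/-- Cauchy–Schwarz equality case: a Hermitian unitary with expectation `1` on a
unit vector fixes that vector. -/
private lemma fixvec {ι : Type*} [Fintype ι] [DecidableEq ι] (X : Matrix ι ι ℂ)
    (hH : X.IsHermitian) (hU : X * X = 1) (ψ : ι → ℂ)
    (hψ : star ψ ⬝ᵥ ψ = 1) (h1 : star ψ ⬝ᵥ (X *ᵥ ψ) = 1) : X *ᵥ ψ = ψ := by
  set φ := X *ᵥ ψ with hφ
  have hφφ : star φ ⬝ᵥ φ = 1 := by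
    rw [hφ, star_mulVec, dotProduct_mulVec, vecMul_vecMul, hH.eq, hU, vecMul_one, hψ]
  have hφψ : star φ ⬝ᵥ ψ = 1 := by
    rw [star_dotProduct, h1, star_one]
  have hd : star (φ - ψ) ⬝ᵥ (φ - ψ) = 0 := by
    rw [star_sub, sub_dotProduct, dotProduct_sub, dotProduct_sub, hφφ, hφψ, h1, hψ]
    norm_num
  have h5 : φ - ψ = 0 := dot_star_self_eq_zero hd
  exact sub_eq_zero.mp h5

private lemma kron_conjT {m n : Type*} [Fintype m] [Fintype n]
    (M : Matrix m m ℂ) (N : Matrix n n ℂ) : (M ⊗ₖ N)ᴴ = Mᴴ ⊗ₖ Nᴴ := by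
  ext ⟨a, b⟩ ⟨c, d⟩
  simp [conjTranspose_apply, mul_comm]

/-- The action of `M ⊗ₖ N` on a vector of the tensor-product space. -/
private noncomputable def act {dA dB : ℕ} (M : Matrix (Fin dA) (Fin dA) ℂ)
    (N : Matrix (Fin dB) (Fin dB) ℂ) (v : Fin dA × Fin dB → ℂ) :
    Fin dA × Fin dB → ℂ := (M ⊗ₖ N) *ᵥ v

private lemma act_act {dA dB : ℕ} (M M' : Matrix (Fin dA) (Fin dA) ℂ)
    (N N' : Matrix (Fin dB) (Fin dB) ℂ) (v : Fin dA × Fin dB → ℂ) :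
    act M N (act M' N' v) = act (M * M') (N * N') v := by
  unfold act
  rw [mulVec_mulVec, ← mul_kronecker_mul]

private lemma act_one {dA dB : ℕ} (v : Fin dA × Fin dB → ℂ) :
    act (1 : Matrix (Fin dA) (Fin dA) ℂ) (1 : Matrix (Fin dB) (Fin dB) ℂ) v = v := by
  unfold act
  rw [one_kronecker_one, one_mulVec]

private lemma act_smul_left {dA dB : ℕ} (ε : ℂ) (M : Matrix (Fin dA) (Fin dA) ℂ)
    (N : Matrix (Fin dB) (Fin dB) ℂ) (v : Fin dA × Fin dB → ℂ) :
    act (ε • M) N v = ε • act M N v := by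
  unfold act
  rw [smul_kronecker, smul_mulVec]

private lemma act_smul_right {dA dB : ℕ} (ε : ℂ) (M : Matrix (Fin dA) (Fin dA) ℂ)
    (N : Matrix (Fin dB) (Fin dB) ℂ) (v : Fin dA × Fin dB → ℂ) :
    act M (ε • N) v = ε • act M N v := by
  unfold act
  rw [kronecker_smul, smul_mulVec]

private lemma act_neg_right {dA dB : ℕ} (M : Matrix (Fin dA) (Fin dA) ℂ)
    (N : Matrix (Fin dB) (Fin dB) ℂ) (v : Fin dA × Fin dB → ℂ) :
    act M (-N) v = -act M N v := by
  have h1 : -N = (-1 : ℂ) • N := by simp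
  rw [h1, act_smul_right]
  simp

private lemma act_vsmul {dA dB : ℕ} (ε : ℂ) (M : Matrix (Fin dA) (Fin dA) ℂ)
    (N : Matrix (Fin dB) (Fin dB) ℂ) (v : Fin dA × Fin dB → ℂ) :
    act M N (ε • v) = ε • act M N v := by
  unfold act
  rw [mulVec_smul]

private lemma act_vneg {dA dB : ℕ} (M : Matrix (Fin dA) (Fin dA) ℂ)
    (N : Matrix (Fin dB) (Fin dB) ℂ) (v : Fin dA × Fin dB → ℂ) :
    act M N (-v) = -act M N v := by
  have h1 : -v = (-1 : ℂ) • v := by simp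
  rw [h1, act_vsmul]
  simp

private lemma act_zero {dA dB : ℕ} (M : Matrix (Fin dA) (Fin dA) ℂ)
    (N : Matrix (Fin dB) (Fin dB) ℂ) :
    act M N (0 : Fin dA × Fin dB → ℂ) = 0 := by
  unfold act
  rw [mulVec_zero]

private lemma sq_cancel {R : Type*} [Monoid R] {x : R} (hx : x * x = 1) (y : R) :
    x * (x * y) = y := by
  rw [← mul_assoc, hx, one_mul]

private lemma eps_cancel {V : Type*} [AddCommMonoid V] [Module ℂ V] {ε : ℂ}
    (hε : ε * ε = 1) {v w : V} (h : ε • v = w) : v = ε • w := by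
  rw [← h, smul_smul, hε, one_smul]

private lemma eps_cancel' {V : Type*} [AddCommMonoid V] [Module ℂ V] {ε : ℂ}
    (hε : ε * ε = 1) {v w : V} (h : ε • v = ε • w) : v = w := by
  have h1 := congrArg (fun u => ε • u) h
  simpa [smul_smul, hε] using h1

/-- Common endgame: if `(1 ⊗ N) ψ` equals its own negation for an involutory `N`,
then `ψ = 0`, contradicting normalization. -/
private lemma act_ending {dA dB : ℕ} (N : Matrix (Fin dB) (Fin dB) ℂ) (hN : N * N = 1)
    (ψ : Fin dA × Fin dB → ℂ) (hψ : star ψ ⬝ᵥ ψ = 1)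
    (hv : act 1 N ψ = -(act 1 N ψ)) : False := by
  have hv0 : act (1 : Matrix (Fin dA) (Fin dA) ℂ) N ψ = 0 := by
    funext x
    have hx := congrFun hv x
    simp only [Pi.neg_apply] at hx
    simp only [Pi.zero_apply]
    linear_combination ((1 : ℂ) / 2) * hx
  have h3 : act (1 : Matrix (Fin dA) (Fin dA) ℂ) N (act 1 N ψ) = ψ := by
    rw [act_act, one_mul, hN, act_one]
  rw [hv0, act_zero] at h3
  rw [← h3] at hψ
  simp at hψ

/-- The case of a trivial Alice observable. -/
private lemma auxA {dA dB : ℕ}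
    (A : Fin 3 → Fin 3 → Matrix (Fin dA) (Fin dA) ℂ)
    (B : Fin 3 → Fin 3 → Matrix (Fin dB) (Fin dB) ℂ)
    (ψ : Fin dA × Fin dB → ℂ)
    (h : IsPerfectStrategy A B ψ)
    (i i₁ i₂ j j₁ j₂ : Fin 3)
    (hrow : ∀ k, A k j * (A k j₁ * A k j₂) = 1)
    (hcol : ∀ l, B i l * (B i₁ l * B i₂ l) = -1)
    (ε : ℂ) (hε : ε * ε = 1) (hA : A i j = ε • 1) : False := by
  obtain ⟨hAH, hAsq, hAc, -, hBH, hBsq, hBc, -, hψ, hperf⟩ := h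
  have fix : ∀ k l, act (A k l) (B k l) ψ = ψ := by
    intro k l
    have hherm : (A k l ⊗ₖ B k l).IsHermitian := by
      have : (A k l ⊗ₖ B k l)ᴴ = A k l ⊗ₖ B k l := by
        rw [kron_conjT, (hAH k l).eq, (hBH k l).eq]
      exact this
    have hsq : (A k l ⊗ₖ B k l) * (A k l ⊗ₖ B k l) = 1 := by
      rw [← mul_kronecker_mul, hAsq, hBsq, one_kronecker_one]
    exact fixvec _ hherm hsq ψ hψ (hperf k l)
  have hab : ∀ k l, act (A k l) 1 ψ = act 1 (B k l) ψ := by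
    intro k l
    calc act (A k l) 1 ψ = act (1 * A k l) (B k l * B k l) ψ := by
          rw [one_mul, hBsq]
      _ = act 1 (B k l) (act (A k l) (B k l) ψ) := (act_act _ _ _ _ _).symm
      _ = act 1 (B k l) ψ := by rw [fix]
  -- ψ is an ε-eigenvector of 1 ⊗ B i j
  have hbij : act 1 (B i j) ψ = ε • ψ := by
    have h0 := fix i j
    rw [hA, act_smul_left] at h0
    exact eps_cancel hε h0
  -- A i j₁ * A i j₂ = ε • 1, hence A i j₂ = ε • A i j₁
  have hA12 : A i j₁ * A i j₂ = ε • 1 := by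
    have h0 := hrow i
    rw [hA, smul_mul_assoc, one_mul] at h0
    exact eps_cancel hε h0
  have hAj2 : A i j₂ = ε • A i j₁ := by
    calc A i j₂ = A i j₁ * (A i j₁ * A i j₂) := (sq_cancel (hAsq i j₁) _).symm
      _ = A i j₁ * (ε • 1) := by rw [hA12]
      _ = ε • A i j₁ := by rw [mul_smul_comm, mul_one]
  -- column relations: B i₂ l = -(B i l * B i₁ l)
  have hB2 : ∀ l, B i₂ l = -(B i l * B i₁ l) := by
    intro l
    have h0 : (B i₁ l * B i l) * (B i l * (B i₁ l * B i₂ l)) = B i₂ l := by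
      rw [mul_assoc, sq_cancel (hBsq i l), sq_cancel (hBsq i₁ l)]
    rw [hcol l] at h0
    rw [← h0, mul_neg, mul_one, hBc i₁ i l]
  -- row relations on ψ
  have hrowψ : ∀ r, act 1 (B r j * (B r j₁ * B r j₂)) ψ = ψ := by
    intro r
    calc act 1 (B r j * (B r j₁ * B r j₂)) ψ
        = act (A r j * (A r j₁ * A r j₂)) (B r j * (B r j₁ * B r j₂)) ψ := by
          rw [hrow r]
      _ = act (A r j) (B r j) (act (A r j₁) (B r j₁) (act (A r j₂) (B r j₂) ψ)) := by
          rw [act_act, act_act, ← mul_assoc, ← mul_assoc]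
      _ = ψ := by rw [fix, fix, fix]
  have hpeel : ∀ r, act 1 (B r j₁ * B r j₂) ψ = act 1 (B r j) ψ := by
    intro r
    have h0 := congrArg (act (1 : Matrix (Fin dA) (Fin dA) ℂ) (B r j)) (hrowψ r)
    rw [act_act, one_mul, sq_cancel (hBsq r j)] at h0
    exact h0
  -- (1 ⊗ B i j₂) ψ = ε • (1 ⊗ B i j₁) ψ
  have hbij2 : act 1 (B i j₂) ψ = ε • act 1 (B i j₁) ψ := by
    have h0 := fix i j₂
    rw [hAj2, act_smul_left] at h0
    have h1 : act (A i j₁) (B i j₂) ψ = ε • ψ := eps_cancel hε h0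
    have h2 := congrArg (act (A i j₁) (1 : Matrix (Fin dB) (Fin dB) ℂ)) h1
    rw [act_act, hAsq i j₁, one_mul, act_vsmul, hab] at h2
    exact h2
  -- first evaluation of the witness vector
  have W1 : act 1 (B i₂ j₁ * B i₂ j₂) ψ = -(ε • act 1 (B i₁ j) ψ) := by
    rw [hpeel i₂]
    calc act 1 (B i₂ j) ψ = act 1 (-(B i j * B i₁ j)) ψ := by rw [← hB2 j]
      _ = -act 1 (B i j * B i₁ j) ψ := act_neg_right _ _ _
      _ = -act 1 (B i₁ j * B i j) ψ := by rw [hBc i i₁ j]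
      _ = -act 1 (B i₁ j) (act 1 (B i j) ψ) := by rw [act_act, one_mul]
      _ = -(ε • act 1 (B i₁ j) ψ) := by rw [hbij, act_vsmul]
  -- second evaluation of the witness vector
  have e2 : act 1 (B i j₂) (act (A i₁ j₂) 1 ψ) = ε • act (A i₁ j₂) (B i j₁) ψ := by
    calc act 1 (B i j₂) (act (A i₁ j₂) 1 ψ)
        = act (A i₁ j₂) (B i j₂) ψ := by rw [act_act, one_mul, mul_one]
      _ = act (A i₁ j₂) 1 (act 1 (B i j₂) ψ) := by rw [act_act, mul_one, one_mul]
      _ = act (A i₁ j₂) 1 (ε • act 1 (B i j₁) ψ) := by rw [hbij2]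
      _ = ε • act (A i₁ j₂) (B i j₁) ψ := by rw [act_vsmul, act_act, mul_one, one_mul]
  have h4 : act (A i₁ j₂) (B i₁ j₁) ψ = act 1 (B i₁ j₁ * B i₁ j₂) ψ := by
    calc act (A i₁ j₂) (B i₁ j₁) ψ
        = act 1 (B i₁ j₁) (act (A i₁ j₂) 1 ψ) := by rw [act_act, one_mul, mul_one]
      _ = act 1 (B i₁ j₁) (act 1 (B i₁ j₂) ψ) := by rw [hab]
      _ = act 1 (B i₁ j₁ * B i₁ j₂) ψ := by rw [act_act, one_mul]
  have W2 : act 1 (B i₂ j₁ * B i₂ j₂) ψ = ε • act 1 (B i₁ j₁ * B i₁ j₂) ψ := by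
    calc act 1 (B i₂ j₁ * B i₂ j₂) ψ
        = act 1 (B i j₁) (act 1 (B i₁ j₁) (act 1 (B i j₂) (act 1 (B i₁ j₂) ψ))) := by
          rw [hB2 j₁, hB2 j₂, neg_mul_neg, act_act, act_act, act_act,
            one_mul, one_mul, one_mul, ← mul_assoc]
      _ = act 1 (B i j₁) (act 1 (B i₁ j₁) (act 1 (B i j₂) (act (A i₁ j₂) 1 ψ))) := by
          rw [← hab]
      _ = act 1 (B i j₁) (act 1 (B i₁ j₁) (ε • act (A i₁ j₂) (B i j₁) ψ)) := by
          rw [e2]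
      _ = act 1 (B i j₁) (ε • act (A i₁ j₂) (B i₁ j₁ * B i j₁) ψ) := by
          rw [act_vsmul, act_act, one_mul]
      _ = ε • act (A i₁ j₂) (B i₁ j₁) ψ := by
          rw [act_vsmul, act_act, one_mul, hBc i₁ i j₁, sq_cancel (hBsq i j₁)]
      _ = ε • act 1 (B i₁ j₁ * B i₁ j₂) ψ := by rw [h4]
  -- combine the two evaluations
  have h0 : ε • act 1 (B i₁ j₁ * B i₁ j₂) ψ = ε • -(act 1 (B i₁ j) ψ) := by
    rw [← W2, W1, smul_neg]
  have hfin : act 1 (B i₁ j₁ * B i₁ j₂) ψ = -(act 1 (B i₁ j) ψ) := eps_cancel' hε h0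
  have hvneg : act 1 (B i₁ j) ψ = -(act 1 (B i₁ j) ψ) := (hpeel i₁).symm.trans hfin
  exact act_ending (B i₁ j) (hBsq i₁ j) ψ hψ hvneg

/-- The case of a trivial Bob observable. -/
private lemma auxB {dA dB : ℕ}
    (A : Fin 3 → Fin 3 → Matrix (Fin dA) (Fin dA) ℂ)
    (B : Fin 3 → Fin 3 → Matrix (Fin dB) (Fin dB) ℂ)
    (ψ : Fin dA × Fin dB → ℂ)
    (h : IsPerfectStrategy A B ψ)
    (i i₁ i₂ j j₁ j₂ : Fin 3)
    (hrow : ∀ k, A k j * (A k j₁ * A k j₂) = 1)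
    (hcol : ∀ l, B i l * (B i₁ l * B i₂ l) = -1)
    (ε : ℂ) (hε : ε * ε = 1) (hB : B i j = ε • 1) : False := by
  obtain ⟨hAH, hAsq, hAc, -, hBH, hBsq, hBc, -, hψ, hperf⟩ := h
  have fix : ∀ k l, act (A k l) (B k l) ψ = ψ := by
    intro k l
    have hherm : (A k l ⊗ₖ B k l).IsHermitian := by
      have : (A k l ⊗ₖ B k l)ᴴ = A k l ⊗ₖ B k l := by
        rw [kron_conjT, (hAH k l).eq, (hBH k l).eq]
      exact this
    have hsq : (A k l ⊗ₖ B k l) * (A k l ⊗ₖ B k l) = 1 := by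
      rw [← mul_kronecker_mul, hAsq, hBsq, one_kronecker_one]
    exact fixvec _ hherm hsq ψ hψ (hperf k l)
  have hab : ∀ k l, act (A k l) 1 ψ = act 1 (B k l) ψ := by
    intro k l
    calc act (A k l) 1 ψ = act (1 * A k l) (B k l * B k l) ψ := by
          rw [one_mul, hBsq]
      _ = act 1 (B k l) (act (A k l) (B k l) ψ) := (act_act _ _ _ _ _).symm
      _ = act 1 (B k l) ψ := by rw [fix]
  -- ψ is an ε-eigenvector of A i j ⊗ 1
  have haij : act (A i j) 1 ψ = ε • ψ := by
    have h0 := fix i j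
    rw [hB, act_smul_right] at h0
    exact eps_cancel hε h0
  -- B i₂ j = -(ε • B i₁ j)
  have hB12 : B i₁ j * B i₂ j = ε • (-1) := by
    have h0 := hcol j
    rw [hB, smul_mul_assoc, one_mul] at h0
    exact eps_cancel hε h0
  have hBi2 : B i₂ j = -(ε • B i₁ j) := by
    calc B i₂ j = B i₁ j * (B i₁ j * B i₂ j) := (sq_cancel (hBsq i₁ j) _).symm
      _ = B i₁ j * (ε • (-1)) := by rw [hB12]
      _ = -(ε • B i₁ j) := by rw [mul_smul_comm, mul_neg, mul_one, smul_neg]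
  -- row relations: A k j₂ = A k j * A k j₁
  have hA2 : ∀ k, A k j₂ = A k j * A k j₁ := by
    intro k
    have h0 : (A k j₁ * A k j) * (A k j * (A k j₁ * A k j₂)) = A k j₂ := by
      rw [mul_assoc, sq_cancel (hAsq k j), sq_cancel (hAsq k j₁)]
    rw [hrow k] at h0
    rw [← h0, mul_one, hAc k j₁ j]
  -- column relations on ψ
  have hcolψ : ∀ c, act (A i c * (A i₁ c * A i₂ c)) 1 ψ = -ψ := by
    intro c
    have h0 : act (A i c * (A i₁ c * A i₂ c)) (B i c * (B i₁ c * B i₂ c)) ψ = ψ := by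
      calc act (A i c * (A i₁ c * A i₂ c)) (B i c * (B i₁ c * B i₂ c)) ψ
          = act (A i c) (B i c) (act (A i₁ c) (B i₁ c) (act (A i₂ c) (B i₂ c) ψ)) := by
            rw [act_act, act_act, ← mul_assoc, ← mul_assoc]
        _ = ψ := by rw [fix, fix, fix]
    rw [hcol c, act_neg_right] at h0
    exact neg_eq_iff_eq_neg.mp h0
  have hpeelc : ∀ c, act (A i₁ c * A i₂ c) 1 ψ = -(act (A i c) 1 ψ) := by
    intro c
    have h0 := congrArg (act (A i c) (1 : Matrix (Fin dB) (Fin dB) ℂ)) (hcolψ c)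
    rw [act_act, one_mul, sq_cancel (hAsq i c), act_vneg] at h0
    exact h0
  -- (A i₂ j ⊗ 1) ψ = -(ε • (A i₁ j ⊗ 1) ψ)
  have hai2 : act (A i₂ j) 1 ψ = -(ε • act (A i₁ j) 1 ψ) := by
    have h0 := fix i₂ j
    rw [hBi2, act_neg_right, act_smul_right] at h0
    have h1 : ε • act (A i₂ j) (B i₁ j) ψ = -ψ := neg_eq_iff_eq_neg.mp h0
    have h2 : act (A i₂ j) (B i₁ j) ψ = ε • -ψ := eps_cancel hε h1
    have h3 := congrArg (act (1 : Matrix (Fin dA) (Fin dA) ℂ) (B i₁ j)) h2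
    rw [act_act, one_mul, hBsq i₁ j, act_vsmul, act_vneg, smul_neg, ← hab] at h3
    exact h3
  -- first evaluation
  have W1' : act (A i₁ j₂ * A i₂ j₂) 1 ψ = -(ε • act 1 (B i j₁) ψ) := by
    rw [hpeelc j₂]
    have hthis : act (A i j₂) 1 ψ = ε • act 1 (B i j₁) ψ := by
      calc act (A i j₂) 1 ψ = act (A i j₁ * A i j) 1 ψ := by rw [hA2 i, hAc i j j₁]
        _ = act (A i j₁) 1 (act (A i j) 1 ψ) := by rw [act_act, one_mul]
        _ = act (A i j₁) 1 (ε • ψ) := by rw [haij]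
        _ = ε • act 1 (B i j₁) ψ := by rw [act_vsmul, hab]
    rw [hthis]
  -- second evaluation
  have h1 : act (A i₂ j) 1 (act 1 (B i₂ j₁) ψ) = -(ε • act (A i₁ j) (B i₂ j₁) ψ) := by
    calc act (A i₂ j) 1 (act 1 (B i₂ j₁) ψ)
        = act 1 (B i₂ j₁) (act (A i₂ j) 1 ψ) := by
          rw [act_act, act_act, one_mul, one_mul, mul_one, mul_one]
      _ = act 1 (B i₂ j₁) (-(ε • act (A i₁ j) 1 ψ)) := by rw [hai2]
      _ = -(ε • act 1 (B i₂ j₁) (act (A i₁ j) 1 ψ)) := by rw [act_vneg, act_vsmul]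
      _ = -(ε • act (A i₁ j) (B i₂ j₁) ψ) := by rw [act_act, one_mul, mul_one]
  have h2 : act (A i₁ j₁) 1 (-(ε • act (A i₁ j) (B i₂ j₁) ψ))
      = -(ε • act (A i₁ j₁ * A i₁ j) (B i₂ j₁) ψ) := by
    rw [act_vneg, act_vsmul, act_act, one_mul]
  have h3 : act (A i₁ j) 1 (-(ε • act (A i₁ j₁ * A i₁ j) (B i₂ j₁) ψ))
      = -(ε • act (A i₁ j₁) (B i₂ j₁) ψ) := by
    rw [act_vneg, act_vsmul, act_act, one_mul, hAc i₁ j₁ j, sq_cancel (hAsq i₁ j)]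
  have h4 : act (A i₁ j₁) (B i₂ j₁) ψ = act 1 (B i₂ j₁ * B i₁ j₁) ψ := by
    calc act (A i₁ j₁) (B i₂ j₁) ψ
        = act 1 (B i₂ j₁) (act (A i₁ j₁) 1 ψ) := by rw [act_act, one_mul, mul_one]
      _ = act 1 (B i₂ j₁) (act 1 (B i₁ j₁) ψ) := by rw [hab]
      _ = act 1 (B i₂ j₁ * B i₁ j₁) ψ := by rw [act_act, one_mul]
  have W2' : act (A i₁ j₂ * A i₂ j₂) 1 ψ = -(ε • act 1 (B i₂ j₁ * B i₁ j₁) ψ) := by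
    calc act (A i₁ j₂ * A i₂ j₂) 1 ψ
        = act (A i₁ j) 1 (act (A i₁ j₁) 1 (act (A i₂ j) 1 (act (A i₂ j₁) 1 ψ))) := by
          rw [hA2 i₁, hA2 i₂, act_act, act_act, act_act,
            one_mul, one_mul, one_mul, ← mul_assoc]
      _ = act (A i₁ j) 1 (act (A i₁ j₁) 1 (act (A i₂ j) 1 (act 1 (B i₂ j₁) ψ))) := by
          rw [hab]
      _ = act (A i₁ j) 1 (act (A i₁ j₁) 1 (-(ε • act (A i₁ j) (B i₂ j₁) ψ))) := by
          rw [h1]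
      _ = act (A i₁ j) 1 (-(ε • act (A i₁ j₁ * A i₁ j) (B i₂ j₁) ψ)) := by rw [h2]
      _ = -(ε • act (A i₁ j₁) (B i₂ j₁) ψ) := h3
      _ = -(ε • act 1 (B i₂ j₁ * B i₁ j₁) ψ) := by rw [h4]
  -- combine
  have hne : -(ε • act 1 (B i₂ j₁ * B i₁ j₁) ψ) = -(ε • act 1 (B i j₁) ψ) :=
    W2'.symm.trans W1'
  have hiter : act 1 (B i₂ j₁ * B i₁ j₁) ψ = act 1 (B i j₁) ψ :=
    eps_cancel' hε (neg_injective hne)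
  -- but the column relation forces the opposite sign
  have hop : B i₂ j₁ * B i₁ j₁ = -(B i j₁) := by
    have h0 : (B i₁ j₁ * B i j₁) * (B i j₁ * (B i₁ j₁ * B i₂ j₁)) = B i₂ j₁ := by
      rw [mul_assoc, sq_cancel (hBsq i j₁), sq_cancel (hBsq i₁ j₁)]
    rw [hcol j₁] at h0
    have h1 : B i₂ j₁ = -(B i₁ j₁ * B i j₁) := by rw [← h0, mul_neg, mul_one]
    calc B i₂ j₁ * B i₁ j₁ = -(B i₁ j₁ * B i j₁) * B i₁ j₁ := by rw [h1]
      _ = -(B i₁ j₁ * (B i j₁ * B i₁ j₁)) := by rw [neg_mul, mul_assoc]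
      _ = -(B i₁ j₁ * (B i₁ j₁ * B i j₁)) := by rw [hBc i i₁ j₁]
      _ = -(B i j₁) := by rw [sq_cancel (hBsq i₁ j₁)]
  have hvneg : act 1 (B i j₁) ψ = -(act 1 (B i j₁) ψ) := by
    calc act 1 (B i j₁) ψ = act 1 (B i₂ j₁ * B i₁ j₁) ψ := hiter.symm
      _ = act 1 (-(B i j₁)) ψ := by rw [hop]
      _ = -(act 1 (B i j₁) ψ) := act_neg_right _ _ _
  exact act_ending (B i j₁) (hBsq i j₁) ψ hψ hvneg

/-- non-redundancy: in any perfect strategy for the `3 × 3` quantum magic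
square game, no observable equals `I` or `-I`. -/
theorem magic_square_no_trivial_observable
    {dA dB : ℕ}
    (A : Fin 3 → Fin 3 → Matrix (Fin dA) (Fin dA) ℂ)
    (B : Fin 3 → Fin 3 → Matrix (Fin dB) (Fin dB) ℂ)
    (ψ : Fin dA × Fin dB → ℂ)
    (h : IsPerfectStrategy A B ψ) :
    ∀ i j, A i j ≠ 1 ∧ A i j ≠ -1 ∧ B i j ≠ 1 ∧ B i j ≠ -1 := by
  obtain ⟨hAH, hAsq, hAc, hArL, hBH, hBsq, hBc, hBcL, hψ, hperf⟩ := id h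
  have hArp : ∀ k, A k 0 * (A k 1 * A k 2) = 1 := by
    intro k
    simpa [List.ofFn_succ, mul_assoc] using hArL k
  have hBcp : ∀ l, B 0 l * (B 1 l * B 2 l) = -1 := by
    intro l
    simpa [List.ofFn_succ, mul_assoc] using hBcL l
  have rowc : ∀ (k : Fin 3) (jj : Fin 3), A k jj * (A k (jj + 1) * A k (jj + 2)) = 1 := by
    intro k jj
    fin_cases jj
    · show A k 0 * (A k 1 * A k 2) = 1
      exact hArp k
    · show A k 1 * (A k 2 * A k 0) = 1
      rw [hAc k 2 0, ← mul_assoc, hAc k 1 0, mul_assoc]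
      exact hArp k
    · show A k 2 * (A k 0 * A k 1) = 1
      rw [← mul_assoc, hAc k 2 0, mul_assoc, hAc k 2 1]
      exact hArp k
  have colc : ∀ (ii : Fin 3) (l : Fin 3), B ii l * (B (ii + 1) l * B (ii + 2) l) = -1 := by
    intro ii l
    fin_cases ii
    · show B 0 l * (B 1 l * B 2 l) = -1
      exact hBcp l
    · show B 1 l * (B 2 l * B 0 l) = -1
      rw [hBc 2 0 l, ← mul_assoc, hBc 1 0 l, mul_assoc]
      exact hBcp l
    · show B 2 l * (B 0 l * B 1 l) = -1
      rw [← mul_assoc, hBc 2 0 l, mul_assoc, hBc 2 1 l]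
      exact hBcp l
  intro i j
  refine ⟨fun hq => ?_, fun hq => ?_, fun hq => ?_, fun hq => ?_⟩
  · exact auxA A B ψ h i (i + 1) (i + 2) j (j + 1) (j + 2)
      (fun k => rowc k j) (fun l => colc i l) 1 (by norm_num)
      (by rw [hq, one_smul])
  · exact auxA A B ψ h i (i + 1) (i + 2) j (j + 1) (j + 2)
      (fun k => rowc k j) (fun l => colc i l) (-1) (by norm_num)
      (by rw [hq, neg_smul, one_smul])
  · exact auxB A B ψ h i (i + 1) (i + 2) j (j + 1) (j + 2)
      (fun k => rowc k j) (fun l => colc i l) 1 (by norm_num)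
      (by rw [hq, one_smul])
  · exact auxB A B ψ h i (i + 1) (i + 2) j (j + 1) (j + 2)
      (fun k => rowc k j) (fun l => colc i l) (-1) (by norm_num)
      (by rw [hq, neg_smul, one_smul])
end
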